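/- arXiv:2407.16159 — 5 statements merged into one kernel-verified Lean document; each statement's English description precedes it below -/
import Mathlib

section
/- Let Z ∈ ℝ^{n×n} be symmetric positive semidefinite with constant diagonal Z_11 > 0 and Z 𝟙 = 0. For any subset S ⊆ [n], let E_S be the set of pairs {i,j} ⊆ S with i ≠ j and Z_ij ≠ 0, and similarly E_{Sᶜ} for the complement. Then | |S| − |Sᶜ| | ≤ 2(|E_S| + |E_{Sᶜ}|). -/
open scoped Classical

lemma entrywise {n : ℕ} (Z : Matrix (Fin n) (Fin n) ℝ) (hsym : Z.IsSymm)
    (hpsd : Z.PosSemidef) (c : ℝ) (hdiag : ∀ i, Z i i = c) (i j : Fin n) (hij : i ≠ j) :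
    |Z i j| ≤ c := by
  have hji : Z j i = Z i j := by
    have := congrFun (congrFun hsym i) j; simpa [Matrix.IsSymm] using this
  have key : ∀ t : ℝ, 0 ≤ c + t * Z j i + (t * Z i j + t * (c * t)) := by
    intro t
    have h := hpsd.dotProduct_mulVec_nonneg (Pi.single i 1 + Pi.single j t)
    simp only [star_trivial, Matrix.mulVec_add, dotProduct_add,
      add_dotProduct, Matrix.mulVec_single, single_dotProduct,
      dotProduct_single] at h
    simpa [hdiag, hij, mul_comm] using h
  rcases abs_cases (Z i j) with ⟨h1, h2⟩ | ⟨h1, h2⟩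
  · have := key (-1); nlinarith
  · have := key 1; nlinarith

lemma quadform {n : ℕ} (Z : Matrix (Fin n) (Fin n) ℝ) (hpsd : Z.PosSemidef)
    (T : Finset (Fin n)) : 0 ≤ ∑ i ∈ T, ∑ j ∈ T, Z i j := by
  have h := hpsd.dotProduct_mulVec_nonneg (fun k => if k ∈ T then (1:ℝ) else 0)
  simp only [star_trivial, dotProduct, Matrix.mulVec] at h
  calc (0:ℝ) ≤ _ := h
    _ = ∑ i ∈ T, ∑ j ∈ T, Z i j := by
      simp only [ite_mul, one_mul, zero_mul, mul_ite, mul_one, mul_zero,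
        Finset.sum_ite_mem, Finset.univ_inter]

lemma rowsum {n : ℕ} (Z : Matrix (Fin n) (Fin n) ℝ)
    (hrow : Z.mulVec 1 = 0) (i : Fin n) : ∑ j, Z i j = 0 := by
  have := congrFun hrow i
  simpa [Matrix.mulVec, dotProduct] using this

lemma diag_pairs {n : ℕ} (Z : Matrix (Fin n) (Fin n) ℝ) (c : ℝ)
    (hdiag : ∀ i, Z i i = c) (T : Finset (Fin n)) :
    ∑ p ∈ (T ×ˢ T).filter (fun p => p.1 = p.2), Z p.1 p.2 = c * T.card := by
  have himg : (T ×ˢ T).filter (fun p => p.1 = p.2) = T.image (fun i => (i, i)) := by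
    ext ⟨a, b⟩
    simp only [Finset.mem_filter, Finset.mem_product, Finset.mem_image]
    constructor
    · rintro ⟨⟨ha, _⟩, h⟩; exact ⟨a, ha, by simp [h]⟩
    · rintro ⟨i, hi, h⟩; obtain ⟨rfl, rfl⟩ := Prod.mk.injEq .. ▸ h
      exact ⟨⟨hi, hi⟩, rfl⟩
  rw [himg, Finset.sum_image (by simp)]
  simp [hdiag, mul_comm]

lemma card_ne_pairs {n : ℕ} (Z : Matrix (Fin n) (Fin n) ℝ) (hsym : Z.IsSymm)
    (T : Finset (Fin n)) :
    ((T ×ˢ T).filter (fun p => p.1 ≠ p.2 ∧ Z p.1 p.2 ≠ 0)).card =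
      2 * ((T ×ˢ T).filter (fun p => p.1 < p.2 ∧ Z p.1 p.2 ≠ 0)).card := by
  have hZ : ∀ i j, Z j i = Z i j := fun i j => congrFun (congrFun hsym i) j
  have hsplit : (T ×ˢ T).filter (fun p => p.1 ≠ p.2 ∧ Z p.1 p.2 ≠ 0) =
      (T ×ˢ T).filter (fun p => p.1 < p.2 ∧ Z p.1 p.2 ≠ 0) ∪
      (T ×ˢ T).filter (fun p => p.2 < p.1 ∧ Z p.1 p.2 ≠ 0) := by
    rw [← Finset.filter_or]
    apply Finset.filter_congr
    intro p _
    constructor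
    · rintro ⟨h1, h2⟩; rcases lt_or_gt_of_ne h1 with h | h
      · exact Or.inl ⟨h, h2⟩
      · exact Or.inr ⟨h, h2⟩
    · rintro (⟨h, h2⟩ | ⟨h, h2⟩)
      exacts [⟨ne_of_lt h, h2⟩, ⟨(ne_of_lt h).symm, h2⟩]
  rw [hsplit, Finset.card_union_of_disjoint, two_mul]
  · congr 1
    apply Finset.card_nbij' (i := fun p => (p.2, p.1)) (j := fun p => (p.2, p.1))
    · intro p hp
      simp only [Finset.mem_filter, Finset.mem_product, Finset.coe_filter, Set.mem_setOf_eq] at hp ⊢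
      exact ⟨⟨hp.1.2, hp.1.1⟩, hp.2.1, by rw [hZ]; exact hp.2.2⟩
    · intro p hp
      simp only [Finset.mem_filter, Finset.mem_product, Finset.coe_filter, Set.mem_setOf_eq] at hp ⊢
      exact ⟨⟨hp.1.2, hp.1.1⟩, hp.2.1, by rw [hZ]; exact hp.2.2⟩
    · intro p _; rfl
    · intro p _; rfl
  · rw [Finset.disjoint_left]
    rintro p hp hq
    simp only [Finset.mem_filter] at hp hq
    exact absurd hq.2.1 (not_lt_of_gt hp.2.1)

/-- Cutset bound: for a symmetric PSD matrix `Z` with constant positive diagonal and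
zero row sums, and any subset `S` of indices, the imbalance `||S| - |Sᶜ||` is at most
twice the number of edges of `G(Z)` inside `S` plus those inside `Sᶜ`. -/
theorem stmt10 {n : ℕ} (Z : Matrix (Fin n) (Fin n) ℝ) (hsym : Z.IsSymm)
    (hpsd : Z.PosSemidef) (c : ℝ) (hc : 0 < c) (hdiag : ∀ i, Z i i = c)
    (hrow : Z.mulVec 1 = 0) (S : Finset (Fin n)) :
    |(S.card : ℝ) - ((Sᶜ : Finset (Fin n)).card : ℝ)| ≤
      2 * ((((S ×ˢ S).filter fun p => p.1 < p.2 ∧ Z p.1 p.2 ≠ 0).card : ℝ) +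
        ((((Sᶜ : Finset (Fin n)) ×ˢ (Sᶜ : Finset (Fin n))).filter
          fun p => p.1 < p.2 ∧ Z p.1 p.2 ≠ 0).card : ℝ)) := by
  have hZ : ∀ i j, Z j i = Z i j := fun i j => congrFun (congrFun hsym i) j
  set Sc := (Sᶜ : Finset (Fin n)) with hSc
  -- off-diagonal sums
  set offS := ∑ p ∈ (S ×ˢ S).filter (fun p => p.1 ≠ p.2), Z p.1 p.2 with hoffS
  set offSc := ∑ p ∈ (Sc ×ˢ Sc).filter (fun p => p.1 ≠ p.2), Z p.1 p.2 with hoffSc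
  -- decomposition of the full square sums
  have hdec : ∀ T : Finset (Fin n),
      ∑ i ∈ T, ∑ j ∈ T, Z i j =
        c * T.card + ∑ p ∈ (T ×ˢ T).filter (fun p => p.1 ≠ p.2), Z p.1 p.2 := by
    intro T
    rw [← Finset.sum_product' (f := fun i j => Z i j)]
    rw [← Finset.sum_filter_add_sum_filter_not (T ×ˢ T) (fun p => p.1 = p.2)]
    rw [diag_pairs Z c hdiag T]
  -- equality of square sums via row sums
  have hcross : ∑ i ∈ S, ∑ j ∈ Sc, Z i j = ∑ i ∈ Sc, ∑ j ∈ S, Z i j := by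
    rw [Finset.sum_comm (f := fun i j => Z i j)]
    exact Finset.sum_congr rfl fun i _ => Finset.sum_congr rfl fun j _ => hZ i j
  have hsq : ∑ i ∈ S, ∑ j ∈ S, Z i j = ∑ i ∈ Sc, ∑ j ∈ Sc, Z i j := by
    have h1 : ∀ i, ∑ j ∈ S, Z i j + ∑ j ∈ Sc, Z i j = 0 := by
      intro i; rw [hSc, Finset.sum_add_sum_compl]; exact rowsum Z hrow i
    have h2 : ∑ i ∈ S, ∑ j ∈ S, Z i j = -∑ i ∈ S, ∑ j ∈ Sc, Z i j := by
      rw [← Finset.sum_neg_distrib]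
      exact Finset.sum_congr rfl fun i _ => by linarith [h1 i]
    have h3 : ∑ i ∈ Sc, ∑ j ∈ Sc, Z i j = -∑ i ∈ Sc, ∑ j ∈ S, Z i j := by
      rw [← Finset.sum_neg_distrib]
      exact Finset.sum_congr rfl fun i _ => by linarith [h1 i]
    rw [h2, h3, hcross]
  -- bound on off-diagonal sums
  have hbound : ∀ T : Finset (Fin n),
      |∑ p ∈ (T ×ˢ T).filter (fun p => p.1 ≠ p.2), Z p.1 p.2| ≤
        c * (2 * ((T ×ˢ T).filter (fun p => p.1 < p.2 ∧ Z p.1 p.2 ≠ 0)).card) := by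
    intro T
    have hdrop : ∑ p ∈ (T ×ˢ T).filter (fun p => p.1 ≠ p.2), Z p.1 p.2 =
        ∑ p ∈ (T ×ˢ T).filter (fun p => p.1 ≠ p.2 ∧ Z p.1 p.2 ≠ 0), Z p.1 p.2 := by
      rw [← Finset.filter_filter]
      exact (Finset.sum_filter_of_ne (fun p _ h => h)).symm
    rw [hdrop]
    calc |∑ p ∈ (T ×ˢ T).filter (fun p => p.1 ≠ p.2 ∧ Z p.1 p.2 ≠ 0), Z p.1 p.2|
        ≤ ∑ p ∈ (T ×ˢ T).filter (fun p => p.1 ≠ p.2 ∧ Z p.1 p.2 ≠ 0), |Z p.1 p.2| :=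
          Finset.abs_sum_le_sum_abs _ _
      _ ≤ ∑ p ∈ (T ×ˢ T).filter (fun p => p.1 ≠ p.2 ∧ Z p.1 p.2 ≠ 0), c := by
          apply Finset.sum_le_sum
          intro p hp
          simp only [Finset.mem_filter] at hp
          exact entrywise Z hsym hpsd c hdiag p.1 p.2 hp.2.1
      _ = c * (((T ×ˢ T).filter (fun p => p.1 ≠ p.2 ∧ Z p.1 p.2 ≠ 0)).card : ℝ) := by
          rw [Finset.sum_const, nsmul_eq_mul, mul_comm]
      _ = c * (2 * ((T ×ˢ T).filter (fun p => p.1 < p.2 ∧ Z p.1 p.2 ≠ 0)).card) := by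
          rw [card_ne_pairs Z hsym T]; push_cast; ring
  -- combine
  have key : c * ((S.card : ℝ) - (Sc.card : ℝ)) = offSc - offS := by
    have := hsq
    rw [hdec S, hdec Sc] at this
    rw [← hoffS, ← hoffSc] at this
    linarith
  have hS := hbound S
  have hSc2 := hbound Sc
  rw [← hoffS] at hS
  rw [← hoffSc] at hSc2
  rw [← mul_le_mul_iff_right₀ hc]
  calc c * |(S.card : ℝ) - (Sc.card : ℝ)| = |c * ((S.card : ℝ) - (Sc.card : ℝ))| := by
        rw [abs_mul, abs_of_pos hc]
    _ = |offSc - offS| := by rw [key]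
    _ ≤ |offS| + |offSc| := by
        calc |offSc - offS| ≤ |offSc| + |offS| := abs_sub _ _
          _ = |offS| + |offSc| := add_comm _ _
    _ ≤ _ := by
        have := add_le_add hS hSc2
        calc |offS| + |offSc| ≤ _ := this
          _ = c * (2 * (_ + _)) := by ring
end

section
/- Consider the block matrix Z = [[2I, X],[Xᵀ, 2I]] with X ∈ ℝ^{m×m}. If Z 𝟙 = 0 and Z ⪰ 0, then the second-smallest eigenvalue of Z satisfies λ₂(Z) ≤ 2, and the choice X = −(2/m) 𝟙𝟙ᵀ attains λ₂(Z) = 2 with eigenvalues {0, 2, …, 2, 4}. -/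
open Matrix

namespace Aux
open Polynomial
variable {n : ℕ}

lemma scalar_X_eq : Matrix.scalar (Fin n) (X : ℝ[X]) = (X : ℝ[X]) • (1 : Matrix (Fin n) (Fin n) ℝ[X]) := by
  rw [Matrix.smul_one_eq_diagonal]
  rfl

lemma charpoly_conj {P Q A : Matrix (Fin n) (Fin n) ℝ} (hPQ : P * Q = 1) :
    (P * A * Q).charpoly = A.charpoly := by
  have key : charmatrix (P * A * Q) =
      (C : ℝ →+* ℝ[X]).mapMatrix P * charmatrix A * (C : ℝ →+* ℝ[X]).mapMatrix Q := by
    rw [charmatrix, charmatrix, mul_sub, sub_mul]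
    congr 1
    · rw [scalar_X_eq, mul_smul_comm, mul_one, smul_mul_assoc, ← _root_.map_mul, hPQ, _root_.map_one]
    · rw [← _root_.map_mul, ← _root_.map_mul]
  have hdet : ((C : ℝ →+* ℝ[X]).mapMatrix P).det * ((C : ℝ →+* ℝ[X]).mapMatrix Q).det = 1 := by
    rw [← det_mul, ← _root_.map_mul, hPQ, _root_.map_one, det_one]
  rw [Matrix.charpoly, Matrix.charpoly, key, det_mul, det_mul]
  ring_nf
  rw [mul_comm, ← mul_assoc, mul_comm (((C : ℝ →+* ℝ[X]).mapMatrix Q).det), hdet, one_mul]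

variable {A : Matrix (Fin n) (Fin n) ℝ} (hA : A.IsHermitian)

lemma U_mul_star : (hA.eigenvectorUnitary : Matrix (Fin n) (Fin n) ℝ) * star (hA.eigenvectorUnitary : Matrix (Fin n) (Fin n) ℝ) = 1 := by
  exact (Matrix.mem_unitaryGroup_iff).mp (hA.eigenvectorUnitary).2

lemma star_mul_U : star (hA.eigenvectorUnitary : Matrix (Fin n) (Fin n) ℝ) * (hA.eigenvectorUnitary : Matrix (Fin n) (Fin n) ℝ) = 1 := by
  exact (Matrix.mem_unitaryGroup_iff').mp (hA.eigenvectorUnitary).2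

lemma diag_eig : Matrix.diagonal ((RCLike.ofReal : ℝ → ℝ) ∘ hA.eigenvalues) = Matrix.diagonal hA.eigenvalues := by
  congr 1

lemma charpoly_eig : A.charpoly = ∏ i, (X - C (hA.eigenvalues i)) := by
  conv_lhs => rw [hA.spectral_theorem, Unitary.conjStarAlgAut_apply]
  rw [charpoly_conj (U_mul_star hA), diag_eig]
  rw [Matrix.charpoly]
  have : charmatrix (Matrix.diagonal hA.eigenvalues) = Matrix.diagonal (fun i => X - C (hA.eigenvalues i)) := by
    ext i j
    by_cases h : i = j
    · subst h; simp
    · simp [h, Matrix.diagonal_apply_ne _ h]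
  rw [this, det_diagonal]

lemma sum_eig : ∑ i, hA.eigenvalues i = A.trace := by
  conv_rhs => rw [hA.spectral_theorem, Unitary.conjStarAlgAut_apply]
  rw [Matrix.trace_mul_cycle, star_mul_U hA, one_mul, diag_eig, trace_diagonal]

lemma sum_eig_sq : ∑ i, (hA.eigenvalues i)^2 = (A * A).trace := by
  conv_rhs => rw [hA.spectral_theorem, Unitary.conjStarAlgAut_apply]
  rw [show ∀ (U D : Matrix (Fin n) (Fin n) ℝ), (U * D * star U) * (U * D * star U) = U * (D * (star U * U) * D) * star U by intros; noncomm_ring]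
  rw [star_mul_U hA, mul_one, diag_eig, diagonal_mul_diagonal, Matrix.trace_mul_cycle, star_mul_U hA, one_mul, trace_diagonal]
  simp [pow_two]

lemma eig_mem_cubic (hcube : A * A * A - (6:ℝ) • (A * A) + (8:ℝ) • A = 0) (i : Fin n) :
    hA.eigenvalues i = 0 ∨ hA.eigenvalues i = 2 ∨ hA.eigenvalues i = 4 := by
  set v : Fin n → ℝ := ⇑(hA.eigenvectorBasis i) with hv
  have hv0 : v ≠ 0 := by
    intro h
    exact hA.eigenvectorBasis.orthonormal.ne_zero i (by ext j; exact congrFun h j)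
  set t := hA.eigenvalues i with ht
  have h1 : A *ᵥ v = t • v := hA.mulVec_eigenvectorBasis i
  have h2 : (A * A) *ᵥ v = (t * t) • v := by
    rw [← Matrix.mulVec_mulVec, h1, Matrix.mulVec_smul, h1, smul_smul]
  have h3 : (A * A * A) *ᵥ v = (t * t * t) • v := by
    rw [← Matrix.mulVec_mulVec, h1, Matrix.mulVec_smul, h2, smul_smul]
    ring_nf
  have h0 : (0 : Matrix (Fin n) (Fin n) ℝ) *ᵥ v = (t*t*t - 6*(t*t) + 8*t) • v := by
    rw [← hcube]
    rw [Matrix.add_mulVec, Matrix.sub_mulVec, Matrix.smul_mulVec, Matrix.smul_mulVec, h1, h2, h3]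
    ext j
    simp [smul_smul]
    ring
  have : (t*t*t - 6*(t*t) + 8*t) • v = 0 := by rw [← h0, Matrix.zero_mulVec]
  have hc : t*t*t - 6*(t*t) + 8*t = 0 := by
    rcases smul_eq_zero.mp this with h | h
    · exact h
    · exact absurd h hv0
  have : t * (t - 2) * (t - 4) = 0 := by ring_nf; linarith [hc]
  rcases mul_eq_zero.mp this with h | h
  · rcases mul_eq_zero.mp h with h' | h'
    · exact Or.inl h'
    · exact Or.inr (Or.inl (by linarith))
  · exact Or.inr (Or.inr (by linarith))

lemma multiset_comp_perm (f : Fin n → ℝ) (σ : Equiv.Perm (Fin n)) :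
    Finset.univ.val.map (f ∘ σ) = Finset.univ.val.map f := by
  have h2 : Finset.univ.val.map (σ : Fin n → Fin n) = Finset.univ.val := by
    conv_rhs => rw [← Finset.map_univ_equiv σ, Finset.map_val]
    rfl
  conv_rhs => rw [← h2]
  rw [Multiset.map_map]

lemma monotone_eq_of_multiset_eq {f g : Fin n → ℝ} (hf : Monotone f) (hg : Monotone g)
    (h : Finset.univ.val.map f = Finset.univ.val.map g) : f = g := by
  have hl : List.Perm (List.ofFn f) (List.ofFn g) := by
    rw [← Multiset.coe_eq_coe, ← Fin.univ_val_map, ← Fin.univ_val_map]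
    exact h
  have heq := List.Perm.eq_of_sortedLE (List.sortedLE_ofFn_iff.mpr hf) (List.sortedLE_ofFn_iff.mpr hg) hl
  funext i
  have h3 := List.get_of_eq heq ⟨i, by simp⟩
  simpa using h3

lemma trace_reindex' {α β : Type*} [Fintype α] [Fintype β] [DecidableEq α] [DecidableEq β]
    (e : α ≃ β) (M : Matrix α α ℝ) : (Matrix.reindex e e M).trace = M.trace := by
  simp only [Matrix.trace, Matrix.diag, reindex_apply, submatrix_apply]
  exact Fintype.sum_equiv e.symm _ _ (fun i => rfl)

lemma trace_fromBlocks' {α β : Type*} [Fintype α] [Fintype β]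
    (A : Matrix α α ℝ) (B : Matrix α β ℝ) (C : Matrix β α ℝ) (D : Matrix β β ℝ) :
    (Matrix.fromBlocks A B C D).trace = A.trace + D.trace := by
  simp [Matrix.trace, Matrix.diag, Fintype.sum_sum_type, fromBlocks]

lemma cubic_helper {A : Type*} [Ring A] [Algebra ℝ A] (B : A) (hB : B * B * B = (4:ℝ) • B) :
    ((2:ℝ)•1 + B)*((2:ℝ)•1 + B)*((2:ℝ)•1 + B) - (6:ℝ)•(((2:ℝ)•1 + B)*((2:ℝ)•1 + B))
      + (8:ℝ)•((2:ℝ)•1 + B) = 0 := by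
  have h2 : (2:ℝ)•(1:A) = 2 := by rw [Algebra.smul_def, mul_one, map_ofNat]
  have h4 : B * B * B = 4 * B := by
    rw [hB, Algebra.smul_def, map_ofNat]
  have h6 : ∀ x : A, (6:ℝ)•x = 6 * x := by intro x; rw [Algebra.smul_def, map_ofNat]
  have h8 : ∀ x : A, (8:ℝ)•x = 8 * x := by intro x; rw [Algebra.smul_def, map_ofNat]
  rw [h2, h6, h8]
  have key : (2 + B)*(2 + B)*(2 + B) - 6*((2 + B)*(2 + B)) + 8*(2 + B) = B*B*B - 4*B := by
    noncomm_ring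
  rw [key, h4, sub_self]

end Aux

open Aux
open Polynomial

/-- The eigenvalues of a Hermitian real matrix, sorted in increasing order. -/
noncomputable def sortedEig {n : ℕ} (A : Matrix (Fin n) (Fin n) ℝ)
    (hA : A.IsHermitian) : Fin n → ℝ :=
  hA.eigenvalues ∘ Tuple.sort hA.eigenvalues

/-- For the block matrix `Z = [[2I, X],[Xᵀ, 2I]]` with `Z 𝟙 = 0` and `Z ⪰ 0`, the
second-smallest eigenvalue satisfies `λ₂(Z) ≤ 2`, and the choice
`X = -(2/m) 𝟙𝟙ᵀ` attains it with eigenvalues `{0, 2, …, 2, 4}`. -/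
theorem stmt11 {m : ℕ} (hm : 2 ≤ m) :
    (∀ (X : Matrix (Fin m) (Fin m) ℝ)
      (Z : Matrix (Fin (m + m)) (Fin (m + m)) ℝ),
      Z = (Matrix.reindex finSumFinEquiv finSumFinEquiv)
            (Matrix.fromBlocks ((2 : ℝ) • (1 : Matrix (Fin m) (Fin m) ℝ)) X Xᵀ
              ((2 : ℝ) • (1 : Matrix (Fin m) (Fin m) ℝ))) →
      ∀ (hpsd : Z.PosSemidef), Z.mulVec 1 = 0 →
        sortedEig Z hpsd.isHermitian ⟨1, by omega⟩ ≤ 2) ∧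
    (∀ (Z₀ : Matrix (Fin (m + m)) (Fin (m + m)) ℝ),
      Z₀ = (Matrix.reindex finSumFinEquiv finSumFinEquiv)
            (Matrix.fromBlocks ((2 : ℝ) • (1 : Matrix (Fin m) (Fin m) ℝ))
              ((-(2 / (m : ℝ))) • Matrix.of (fun _ _ => (1 : ℝ)))
              (((-(2 / (m : ℝ))) • Matrix.of (fun _ _ => (1 : ℝ)))ᵀ)
              ((2 : ℝ) • (1 : Matrix (Fin m) (Fin m) ℝ))) →
      ∀ (h₀ : Z₀.IsHermitian),
        sortedEig Z₀ h₀ ⟨0, by omega⟩ = 0 ∧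
        sortedEig Z₀ h₀ ⟨m + m - 1, by omega⟩ = 4 ∧
        (∀ k : Fin (m + m), k ≠ ⟨0, by omega⟩ → k ≠ ⟨m + m - 1, by omega⟩ →
          sortedEig Z₀ h₀ k = 2) ∧
        sortedEig Z₀ h₀ ⟨1, by omega⟩ = 2) := by
  constructor
  · intro M Z hZdef hpsd _
    set f : Fin (m + m) → ℝ := hpsd.isHermitian.eigenvalues with hf
    set e : Fin m ⊕ Fin m ≃ Fin (m + m) := finSumFinEquiv with he
    set W : Matrix (Fin m ⊕ Fin m) (Fin m ⊕ Fin m) ℝ :=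
      Matrix.fromBlocks ((2 : ℝ) • 1) M Mᵀ ((2 : ℝ) • 1) with hW
    have hZ : Z = Matrix.reindexAlgEquiv ℝ ℝ e W := hZdef
    set Sw : Matrix (Fin m ⊕ Fin m) (Fin m ⊕ Fin m) ℝ :=
      Matrix.fromBlocks 1 0 0 (-1) with hSw
    set S : Matrix (Fin (m + m)) (Fin (m + m)) ℝ := Matrix.reindexAlgEquiv ℝ ℝ e Sw with hS
    have hSwSw : Sw * Sw = 1 := by
      rw [hSw, Matrix.fromBlocks_multiply]
      simp [Matrix.fromBlocks_one]
    have hSWS : Sw * W * Sw = (4:ℝ) • 1 - W := by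
      rw [hSw, hW, Matrix.fromBlocks_multiply, Matrix.fromBlocks_multiply]
      ext (i|i) (j|j) <;>
        simp [Matrix.smul_apply, Matrix.one_apply, Matrix.sub_apply] <;>
        first
          | rfl
          | (split_ifs <;> first | rfl | ring | simp)
    have hSS : S * S = 1 := by rw [hS, ← _root_.map_mul, hSwSw, _root_.map_one]
    have hconj : S * Z * S = (4:ℝ) • 1 - Z := by
      rw [hS, hZ, ← _root_.map_mul, ← _root_.map_mul, hSWS, map_sub, _root_.map_smul,
        _root_.map_one]
    have hch : Z.charpoly = ∏ i, (Polynomial.X - C (f i)) := charpoly_eig hpsd.isHermitian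
    have hc1 : ((4:ℝ) • (1 : Matrix (Fin (m+m)) (Fin (m+m)) ℝ) - Z).charpoly = Z.charpoly := by
      rw [← hconj]; exact charpoly_conj hSS
    set φ : ℝ[X] →+* ℝ[X] := (Polynomial.aeval ((4:ℝ[X]) - Polynomial.X)).toRingHom with hφ
    have hφX : φ Polynomial.X = 4 - Polynomial.X := by simp [hφ]
    have hφC : ∀ r : ℝ, φ (C r) = C r := by intro r; simp [hφ]
    have hmap : (charmatrix Z).map φ = -(charmatrix ((4:ℝ) • 1 - Z)) := by
      ext i j
      by_cases hij : i = j
      · subst hij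
        simp only [Matrix.map_apply, charmatrix_apply_eq, map_sub, hφX, hφC,
          Matrix.neg_apply, Matrix.sub_apply, Matrix.smul_apply, Matrix.one_apply_eq,
          smul_eq_mul, mul_one, map_ofNat]
        ring
      · simp only [Matrix.map_apply, charmatrix_apply_ne _ _ _ hij, map_neg, hφC,
          Matrix.neg_apply, Matrix.sub_apply, Matrix.smul_apply, Matrix.one_apply_ne hij,
          smul_eq_mul, mul_zero]
        simp
    have heven : Even (m + m) := ⟨m, rfl⟩
    have hdet : φ Z.charpoly = ((4:ℝ) • (1 : Matrix (Fin (m+m)) (Fin (m+m)) ℝ) - Z).charpoly := by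
      rw [Matrix.charpoly, RingHom.map_det, RingHom.mapMatrix_apply, hmap, Matrix.det_neg, Matrix.charpoly]
      simp [heven.neg_one_pow]
    have hprod : φ (∏ i, (Polynomial.X - C (f i))) = ∏ i, (Polynomial.X - C (4 - f i)) := by
      rw [map_prod]
      have hfac : ∀ i : Fin (m+m), φ (Polynomial.X - C (f i)) =
          -(Polynomial.X - C (4 - f i)) := by
        intro i
        rw [map_sub, hφX, hφC, map_sub, map_ofNat]
        ring
      rw [Finset.prod_congr rfl (fun i _ => hfac i)]
      rw [show (fun i : Fin (m+m) => -(Polynomial.X - C (4 - f i)))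
          = (fun i => (-1) * (Polynomial.X - C (4 - f i))) by funext i; ring]
      rw [Finset.prod_mul_distrib, Finset.prod_const]
      simp [heven.neg_one_pow]
    have hPP : ∏ i, (Polynomial.X - C (f i)) = ∏ i, (Polynomial.X - C (4 - f i)) := by
      rw [← hch, ← hprod, ← hch, hdet, hc1]
    have hroots : Finset.univ.val.map f = Finset.univ.val.map (fun i => 4 - f i) := by
      have h1 := Polynomial.roots_multiset_prod_X_sub_C (Finset.univ.val.map f)
      have h2 := Polynomial.roots_multiset_prod_X_sub_C
        (Finset.univ.val.map (fun i : Fin (m+m) => 4 - f i))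
      rw [← h1, ← h2]
      congr 1
      rw [Multiset.map_map, Multiset.map_map, ← Finset.prod_eq_multiset_prod,
        ← Finset.prod_eq_multiset_prod]
      exact hPP
    set σ : Equiv.Perm (Fin (m+m)) := Tuple.sort f with hσ
    set s : Fin (m+m) → ℝ := f ∘ σ with hs
    have hmono : Monotone s := Tuple.monotone_sort f
    set t : Fin (m+m) → ℝ := fun k => 4 - s (Fin.rev k) with htdef
    have htmono : Monotone t := by
      intro a b hab
      have hvv : s (Fin.rev b) ≤ s (Fin.rev a) := hmono (Fin.rev_le_rev.mpr hab)
      simp only [htdef]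
      linarith
    have hms : Finset.univ.val.map s = Finset.univ.val.map f := multiset_comp_perm f σ
    have hmt : Finset.univ.val.map s = Finset.univ.val.map t := by
      have e2 : Finset.univ.val.map t = Finset.univ.val.map ((fun x : ℝ => 4 - x) ∘ s) :=
        multiset_comp_perm ((fun x : ℝ => 4 - x) ∘ s) Fin.revPerm
      have e3 : Finset.univ.val.map ((fun x : ℝ => 4 - x) ∘ s)
          = (Finset.univ.val.map s).map (fun x : ℝ => 4 - x) := (Multiset.map_map _ _ _).symm
      have e4 : (Finset.univ.val.map f).map (fun x : ℝ => 4 - x)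
          = Finset.univ.val.map (fun i => 4 - f i) := Multiset.map_map _ _ _
      rw [e2, e3, hms, e4, ← hroots]
    have hst : s = t := monotone_eq_of_multiset_eq hmono htmono hmt
    have hp1 : (1 : ℕ) < m + m := by omega
    have hkey : s ⟨1, hp1⟩ = 4 - s (Fin.rev ⟨1, hp1⟩) := congrFun hst _
    have hle : (⟨1, hp1⟩ : Fin (m+m)) ≤ Fin.rev ⟨1, hp1⟩ := by
      simp [Fin.le_def, Fin.val_rev]
      omega
    have := hmono hle
    show s ⟨1, hp1⟩ ≤ 2
    linarith
  · intro Z₀ hZdef h₀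
    classical
    have hm0 : (m:ℝ) ≠ 0 := Nat.cast_ne_zero.mpr (by omega)
    set e : Fin m ⊕ Fin m ≃ Fin (m + m) := finSumFinEquiv with he
    set J : Matrix (Fin m) (Fin m) ℝ := Matrix.of (fun _ _ => (1:ℝ)) with hJ
    set Xm : Matrix (Fin m) (Fin m) ℝ := (-(2 / (m:ℝ))) • J with hXm
    have hXt : Xmᵀ = Xm := by
      rw [hXm, transpose_smul]
      congr 1
    set W : Matrix (Fin m ⊕ Fin m) (Fin m ⊕ Fin m) ℝ :=
      Matrix.fromBlocks ((2:ℝ) • 1) Xm Xmᵀ ((2:ℝ) • 1) with hW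
    have hZ : Z₀ = Matrix.reindexAlgEquiv ℝ ℝ e W := hZdef
    have hJJ : J * J = (m:ℝ) • J := by
      ext i j
      simp [hJ, Matrix.mul_apply]
    have hXX : Xm * Xm = ((4:ℝ)/m) • J := by
      rw [hXm, smul_mul_assoc, mul_smul_comm, hJJ, smul_smul, smul_smul]
      congr 1
      field_simp
      ring
    have hXXX : Xm * Xm * Xm = (4:ℝ) • Xm := by
      rw [hXX, hXm, smul_mul_assoc, mul_smul_comm, hJJ, smul_smul, smul_smul, smul_smul]
      congr 1
      field_simp
    set B : Matrix (Fin m ⊕ Fin m) (Fin m ⊕ Fin m) ℝ :=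
      Matrix.fromBlocks 0 Xm Xm 0 with hB
    have hB3 : B * B * B = (4:ℝ) • B := by
      rw [hB, Matrix.fromBlocks_multiply, Matrix.fromBlocks_multiply]
      simp only [Matrix.mul_zero, Matrix.zero_mul, add_zero, zero_add]
      rw [hXXX, Matrix.fromBlocks_smul]
      simp
    have hone : (1 : Matrix (Fin m ⊕ Fin m) (Fin m ⊕ Fin m) ℝ) = Matrix.fromBlocks 1 0 0 1 :=
      Matrix.fromBlocks_one.symm
    have hWB : W = (2:ℝ) • 1 + B := by
      rw [hW, hXt, hB, hone, Matrix.fromBlocks_smul, Matrix.fromBlocks_add]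
      simp
    have hcubeW : W * W * W - (6:ℝ) • (W * W) + (8:ℝ) • W = 0 := by
      rw [hWB]; exact cubic_helper B hB3
    have hcubeZ : Z₀ * Z₀ * Z₀ - (6:ℝ) • (Z₀ * Z₀) + (8:ℝ) • Z₀ = 0 := by
      rw [hZ, ← _root_.map_mul, ← _root_.map_mul, ← _root_.map_smul, ← _root_.map_smul,
        ← map_sub, ← map_add, hcubeW, map_zero]
    have htrJ : J.trace = m := by
      simp [hJ, Matrix.trace, Matrix.diag]
    have htrW : W.trace = 4*m := by
      rw [hW, trace_fromBlocks']
      simp [trace_smul, trace_one, smul_eq_mul]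
      ring
    have htrZ : Z₀.trace = 4*m := by
      rw [hZ, reindexAlgEquiv_apply, trace_reindex', htrW]
    have htrB : B.trace = 0 := by
      rw [hB, trace_fromBlocks', trace_zero, add_zero]
    have htrBB : (B * B).trace = 8 := by
      rw [hB, Matrix.fromBlocks_multiply]
      simp only [Matrix.mul_zero, Matrix.zero_mul, add_zero, zero_add]
      rw [trace_fromBlocks']
      simp [hXX, trace_smul, htrJ, smul_eq_mul]
      field_simp
      norm_num
    have hexpand : W * W = (4:ℝ) • 1 + (4:ℝ) • B + B * B := by
      rw [hWB]
      simp only [add_mul, mul_add, smul_mul_assoc, mul_smul_comm, mul_one, one_mul, smul_smul]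
      module
    have htrW2 : (W * W).trace = 8*m + 8 := by
      rw [hexpand, trace_add, trace_add, trace_smul, trace_smul, trace_one, htrB, htrBB]
      simp [Fintype.card_sum]
      ring
    have htrZ2 : (Z₀ * Z₀).trace = 8*m + 8 := by
      rw [hZ, ← _root_.map_mul, reindexAlgEquiv_apply, trace_reindex', htrW2]
    set f : Fin (m+m) → ℝ := h₀.eigenvalues with hf
    have hsum : ∑ i, f i = 4*m := by rw [hf, sum_eig h₀, htrZ]
    have hsq : ∑ i, (f i)^2 = 8*m + 8 := by rw [hf, sum_eig_sq h₀, htrZ2]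
    have hval : ∀ i, f i = 0 ∨ f i = 2 ∨ f i = 4 := fun i => eig_mem_cubic h₀ hcubeZ i
    have hdev2 : ∑ i, (f i - 2)^2 = 8 := by
      have hterm : ∀ i : Fin (m+m), (f i - 2)^2 = (f i)^2 - 4 * f i + 4 := fun i => by ring
      rw [Finset.sum_congr rfl (fun i _ => hterm i), Finset.sum_add_distrib,
        Finset.sum_sub_distrib, ← Finset.mul_sum, hsq, hsum, Finset.sum_const,
        Finset.card_univ, Fintype.card_fin]
      push_cast
      ring
    have hdev1 : ∑ i, (f i - 2) = 0 := by
      rw [Finset.sum_sub_distrib, hsum, Finset.sum_const, Finset.card_univ, Fintype.card_fin]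
      push_cast
      ring
    set T : Finset (Fin (m+m)) := Finset.univ.filter (fun i => f i ≠ 2) with hT
    have hTmem : ∀ i, i ∈ T ↔ f i ≠ 2 := fun i => by simp [hT]
    have hsumT2 : ∑ i ∈ T, (f i - 2)^2 = 8 := by
      rw [← hdev2]
      apply Finset.sum_subset (Finset.subset_univ T)
      intro x _ hx
      have : f x = 2 := by by_contra hc; exact hx ((hTmem x).mpr hc)
      rw [this]; ring
    have hsumT1 : ∑ i ∈ T, (f i - 2) = 0 := by
      rw [← hdev1]
      apply Finset.sum_subset (Finset.subset_univ T)
      intro x _ hx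
      have : f x = 2 := by by_contra hc; exact hx ((hTmem x).mpr hc)
      rw [this]; ring
    have hcardT : T.card = 2 := by
      have h4 : ∑ i ∈ T, (f i - 2)^2 = (T.card : ℝ) * 4 := by
        rw [Finset.sum_congr rfl (fun i hi => ?_), Finset.sum_const, nsmul_eq_mul]
        have hne := (hTmem i).mp hi
        rcases hval i with h|h|h
        · rw [h]; norm_num
        · exact absurd h hne
        · rw [h]; norm_num
      rw [hsumT2] at h4
      have : (T.card : ℝ) = 2 := by linarith
      exact_mod_cast this
    obtain ⟨a, b, hab, hTab⟩ := Finset.card_eq_two.mp hcardT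
    have haT : a ∈ T := by rw [hTab]; simp
    have hbT : b ∈ T := by rw [hTab]; simp
    have ha2 : f a ≠ 2 := (hTmem a).mp haT
    have hb2 : f b ≠ 2 := (hTmem b).mp hbT
    have habsum : (f a - 2) + (f b - 2) = 0 := by
      rw [hTab, Finset.sum_pair hab] at hsumT1
      exact hsumT1
    have hva : f a = 0 ∨ f a = 4 := by
      rcases hval a with h|h|h
      · exact Or.inl h
      · exact absurd h ha2
      · exact Or.inr h
    have hvb : f b = 0 ∨ f b = 4 := by
      rcases hval b with h|h|h
      · exact Or.inl h
      · exact absurd h hb2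
      · exact Or.inr h
    have hnotT : ∀ j, j ≠ a → j ≠ b → f j = 2 := by
      intro j hja hjb
      by_contra hc
      have : j ∈ T := (hTmem j).mpr hc
      rw [hTab] at this
      simp at this
      rcases this with h|h
      · exact hja h
      · exact hjb h
    obtain ⟨a0, a4, h04ne, hfa0, hfa4, hoth⟩ :
        ∃ a0 a4 : Fin (m+m), a0 ≠ a4 ∧ f a0 = 0 ∧ f a4 = 4 ∧
          (∀ j, j ≠ a0 → j ≠ a4 → f j = 2) := by
      rcases hva with h0|h4
      · have hfb : f b = 4 := by
          rcases hvb with h|h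
          · rw [h0, h] at habsum; norm_num at habsum
          · exact h
        exact ⟨a, b, hab, h0, hfb, fun j hja hjb => hnotT j hja hjb⟩
      · have hfb : f b = 0 := by
          rcases hvb with h|h
          · exact h
          · rw [h4, h] at habsum; norm_num at habsum
        exact ⟨b, a, hab.symm, hfb, h4, fun j hjb hja => hnotT j hja hjb⟩
    set σ : Equiv.Perm (Fin (m+m)) := Tuple.sort f with hσ
    set s : Fin (m+m) → ℝ := f ∘ σ with hs
    have hmono : Monotone s := Tuple.monotone_sort f
    have hsval : ∀ k, s k = 0 ∨ s k = 2 ∨ s k = 4 := fun k => hval (σ k)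
    have hsapp : ∀ k, s k = f (σ k) := fun k => rfl
    have huniq0 : ∀ j, s j = 0 → j = σ.symm a0 := by
      intro j hj
      have hσj : σ j = a0 := by
        by_contra hne
        by_cases h4 : σ j = a4
        · rw [hsapp, h4, hfa4] at hj; norm_num at hj
        · rw [hsapp, hoth (σ j) hne h4] at hj; norm_num at hj
      rw [← hσj, Equiv.symm_apply_apply]
    have huniq4 : ∀ j, s j = 4 → j = σ.symm a4 := by
      intro j hj
      have hσj : σ j = a4 := by
        by_contra hne
        by_cases h0 : σ j = a0
        · rw [hsapp, h0, hfa0] at hj; norm_num at hj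
        · rw [hsapp, hoth (σ j) h0 hne] at hj; norm_num at hj
      rw [← hσj, Equiv.symm_apply_apply]
    have hs0 : s (σ.symm a0) = 0 := by rw [hsapp, Equiv.apply_symm_apply]; exact hfa0
    have hs4 : s (σ.symm a4) = 4 := by rw [hsapp, Equiv.apply_symm_apply]; exact hfa4
    have hp0 : (0:ℕ) < m + m := by omega
    have hpl : m + m - 1 < m + m := by omega
    have hp1 : (1:ℕ) < m + m := by omega
    have hg1 : s ⟨0, hp0⟩ = 0 := by
      have hle : (⟨0, hp0⟩ : Fin (m+m)) ≤ σ.symm a0 := by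
        rw [Fin.le_def]; exact Nat.zero_le _
      have := hmono hle
      rw [hs0] at this
      rcases hsval ⟨0, hp0⟩ with h|h|h
      · exact h
      · linarith
      · linarith
    have hg2 : s ⟨m + m - 1, hpl⟩ = 4 := by
      have hle : σ.symm a4 ≤ (⟨m + m - 1, hpl⟩ : Fin (m+m)) := by
        rw [Fin.le_def]
        have := (σ.symm a4).isLt
        simp
        omega
      have := hmono hle
      rw [hs4] at this
      rcases hsval ⟨m + m - 1, hpl⟩ with h|h|h
      · linarith
      · linarith
      · exact h
    have hg3 : ∀ k : Fin (m+m), k ≠ ⟨0, hp0⟩ → k ≠ ⟨m + m - 1, hpl⟩ → s k = 2 := by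
      intro k hk0 hkl
      rcases hsval k with h|h|h
      · exfalso
        have h1 := huniq0 k h
        have h2 := huniq0 ⟨0, hp0⟩ hg1
        exact hk0 (h1.trans h2.symm)
      · exact h
      · exfalso
        have h1 := huniq4 k h
        have h2 := huniq4 ⟨m + m - 1, hpl⟩ hg2
        exact hkl (h1.trans h2.symm)
    refine ⟨hg1, hg2, fun k hk0 hkl => hg3 k ?_ ?_, ?_⟩
    · intro h; exact hk0 h
    · intro h; exact hkl h
    · apply hg3
      · intro h
        have := congrArg Fin.val h
        simp at this
      · intro h
        have := congrArg Fin.val h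
        simp at this
        omega
end

section
/- Let A: H ⇉ H be a maximally monotone operator on a Hilbert space H and L₁₁ ∈ ℝ with |L₁₁| < 1. Then the operator (1/(1−L₁₁))·A is maximally monotone, and for any fixed w ∈ H, the equation x = J_A(w + L₁₁ x) has a unique solution x, given by x = J_{(1/(1−L₁₁))A}(w/(1−L₁₁)). -/
set_option maxHeartbeats 1000000

open scoped RealInnerProductSpace
open Finset

variable {H : Type*} [NormedAddCommGroup H] [InnerProductSpace ℝ H]

/-- A set-valued operator on `H`, identified with its graph, is monotone. -/
def MonotoneOp (A : Set (H × H)) : Prop :=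
  ∀ p ∈ A, ∀ q ∈ A, 0 ≤ ⟪p.1 - q.1, p.2 - q.2⟫

/-- A monotone operator is maximally monotone if it has no proper monotone extension. -/
def MaximallyMonotone (A : Set (H × H)) : Prop :=
  MonotoneOp A ∧ ∀ B : Set (H × H), MonotoneOp B → A ⊆ B → B = A

/-- The operator `c • A`, scaling the output of `A` by `c`. -/
def scaleOp (c : ℝ) (A : Set (H × H)) : Set (H × H) :=
  {p | ∃ q ∈ A, p = (q.1, c • q.2)}

/-- barycentric identity -/
lemma lemA {ι : Type*} (t : Finset ι) (w : ι → ℝ) (v : ι → H)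
    (hw : ∑ i ∈ t, w i = 1) (p : H) :
    ∑ i ∈ t, w i * ‖v i - p‖ ^ 2
      = (∑ i ∈ t, w i * ‖v i - (∑ j ∈ t, w j • v j)‖ ^ 2) + ‖(∑ j ∈ t, w j • v j) - p‖ ^ 2 := by
  set z : H := ∑ j ∈ t, w j • v j with hz
  have key : ∀ i ∈ t, w i * ‖v i - p‖ ^ 2
      = w i * ‖v i - z‖ ^ 2 + (2 * (w i * ⟪v i - z, z - p⟫)) + w i * ‖z - p‖ ^ 2 := by
    intro i _
    have h : v i - p = (v i - z) + (z - p) := by abel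
    rw [h, @norm_add_sq_real]
    ring
  rw [Finset.sum_congr rfl key]
  rw [Finset.sum_add_distrib, Finset.sum_add_distrib]
  have h2 : ∑ i ∈ t, 2 * (w i * ⟪v i - z, z - p⟫) = 0 := by
    have : ∑ i ∈ t, (w i * ⟪v i - z, z - p⟫) = ⟪∑ i ∈ t, w i • (v i - z), z - p⟫ := by
      rw [sum_inner]
      exact Finset.sum_congr rfl fun i _ => by rw [real_inner_smul_left]
    have hzero : ∑ i ∈ t, w i • (v i - z) = 0 := by
      simp only [smul_sub, Finset.sum_sub_distrib, ← Finset.sum_smul, hw, one_smul, hz,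
        sub_self]
    rw [← Finset.mul_sum, this, hzero, inner_zero_left, mul_zero]
  have h3 : ∑ i ∈ t, w i * ‖z - p‖ ^ 2 = ‖z - p‖ ^ 2 := by
    rw [← Finset.sum_mul, hw, one_mul]
  rw [h2, h3, add_zero]

lemma lemB {ι : Type*} (t : Finset ι) (w : ι → ℝ) (v : ι → H)
    (hw : ∑ i ∈ t, w i = 1) :
    ∑ i ∈ t, ∑ j ∈ t, w i * (w j * ‖v j - v i‖ ^ 2)
      = 2 * ∑ i ∈ t, w i * ‖v i - (∑ j ∈ t, w j • v j)‖ ^ 2 := by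
  set z : H := ∑ j ∈ t, w j • v j with hz
  have key : ∀ i ∈ t, ∑ j ∈ t, w i * (w j * ‖v j - v i‖ ^ 2)
      = w i * ((∑ j ∈ t, w j * ‖v j - z‖ ^ 2) + ‖z - v i‖ ^ 2) := by
    intro i hi
    rw [← Finset.mul_sum, lemA t w v hw (v i)]
  rw [Finset.sum_congr rfl key]
  have : ∀ i ∈ t, w i * ((∑ j ∈ t, w j * ‖v j - z‖ ^ 2) + ‖z - v i‖ ^ 2)
      = w i * (∑ j ∈ t, w j * ‖v j - z‖ ^ 2) + w i * ‖v i - z‖ ^ 2 := by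
    intro i _
    rw [norm_sub_rev z (v i)]; ring
  rw [Finset.sum_congr rfl this, Finset.sum_add_distrib, ← Finset.sum_mul, hw, one_mul,
    two_mul]


lemma lipCenters (M : Set (H × H)) (hM : MonotoneOp M) {p q : H × H}
    (hp : p ∈ M) (hq : q ∈ M) :
    ‖(p.1 - p.2) - (q.1 - q.2)‖ ≤ ‖(p.1 + p.2) - (q.1 + q.2)‖ := by
  have hmono := hM p hp q hq
  have h1 : ‖(p.1 - p.2) - (q.1 - q.2)‖^2 ≤ ‖(p.1 + p.2) - (q.1 + q.2)‖^2 := by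
    have e1 : (p.1 - p.2) - (q.1 - q.2) = (p.1 - q.1) - (p.2 - q.2) := by abel
    have e2 : (p.1 + p.2) - (q.1 + q.2) = (p.1 - q.1) + (p.2 - q.2) := by abel
    rw [e1, e2, @norm_add_sq_real, @norm_sub_sq_real]
    linarith
  nlinarith [norm_nonneg ((p.1 - p.2) - (q.1 - q.2)), norm_nonneg ((p.1 + p.2) - (q.1 + q.2))]

lemma core [CompleteSpace H] (M : Set (H × H)) (hM : MonotoneOp M) (u : H) (R : ℝ)
    (hne : ∃ p ∈ M, ‖p.1 + p.2 - u‖ ≤ R) :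
    ∃ y : H, ∀ p ∈ M, ‖p.1 + p.2 - u‖ ≤ R → ‖y - (p.1 - p.2)‖ ≤ ‖u - (p.1 + p.2)‖ := by
  classical
  obtain ⟨p₀, hp₀M, hp₀R⟩ := hne
  have hR0 : 0 ≤ R := le_trans (norm_nonneg _) hp₀R
  obtain ⟨P, hPdef⟩ : ∃ P : Set (H × H), P = {p | p ∈ M ∧ ‖p.1 + p.2 - u‖ ≤ R} := ⟨_, rfl⟩
  have hPmem : ∀ p, p ∈ P ↔ (p ∈ M ∧ ‖p.1 + p.2 - u‖ ≤ R) := fun p => by rw [hPdef]; rfl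
  have hp₀ : p₀ ∈ P := (hPmem p₀).2 ⟨hp₀M, hp₀R⟩
  obtain ⟨g, hgdef⟩ : ∃ g : H × H → H → ℝ,
      ∀ p y, g p y = ‖y - (p.1 - p.2)‖ ^ 2 - ‖u - (p.1 + p.2)‖ ^ 2 := ⟨_, fun _ _ => rfl⟩
  obtain ⟨G, hGdef⟩ : ∃ G : H → Set ℝ, ∀ y, G y = (fun p => g p y) '' P := ⟨_, fun _ => rfl⟩
  have hGmem : ∀ (y : H) (p) (_ : p ∈ P), g p y ∈ G y := fun y p hp => by
    rw [hGdef]; exact ⟨p, hp, rfl⟩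
  have hGel : ∀ (y : H) (r) (_ : r ∈ G y), ∃ p ∈ P, g p y = r := fun y r hr => by
    rw [hGdef] at hr; obtain ⟨p, hp, e⟩ := hr; exact ⟨p, hp, e⟩
  obtain ⟨φ, hφdef⟩ : ∃ φ : H → ℝ, ∀ y, φ y = sSup (G y) := ⟨_, fun _ => rfl⟩
  have hcball : ∀ p ∈ P, ‖(p.1 - p.2) - (p₀.1 - p₀.2)‖ ≤ 2 * R := by
    intro p hpP
    obtain ⟨hpM, hpR⟩ := (hPmem p).1 hpP
    calc ‖(p.1 - p.2) - (p₀.1 - p₀.2)‖ ≤ ‖(p.1 + p.2) - (p₀.1 + p₀.2)‖ :=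
          lipCenters M hM hpM hp₀M
      _ = ‖(p.1 + p.2 - u) - (p₀.1 + p₀.2 - u)‖ := by rw [sub_sub_sub_cancel_right]
      _ ≤ ‖p.1 + p.2 - u‖ + ‖p₀.1 + p₀.2 - u‖ := norm_sub_le _ _
      _ ≤ 2 * R := by linarith
  have hcb : ∀ p ∈ P, ∀ y : H, ‖y - (p.1 - p.2)‖ ≤ ‖y - (p₀.1 - p₀.2)‖ + 2 * R := by
    intro p hpP y
    calc ‖y - (p.1 - p.2)‖ ≤ ‖y - (p₀.1 - p₀.2)‖ + ‖(p₀.1 - p₀.2) - (p.1 - p.2)‖ := by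
          have e : y - (p.1 - p.2) = (y - (p₀.1 - p₀.2)) + ((p₀.1 - p₀.2) - (p.1 - p.2)) := by
            abel
          rw [e]; exact norm_add_le _ _
      _ ≤ ‖y - (p₀.1 - p₀.2)‖ + 2 * R := by
          have h' : ‖(p₀.1 - p₀.2) - (p.1 - p.2)‖ ≤ 2 * R := by
            rw [norm_sub_rev]; exact hcball p hpP
          linarith
  have hGne : ∀ y : H, (G y).Nonempty := fun y => ⟨g p₀ y, hGmem y p₀ hp₀⟩
  have hbdd : ∀ y : H, BddAbove (G y) := by
    intro y
    refine ⟨(‖y - (p₀.1 - p₀.2)‖ + 2 * R) ^ 2, ?_⟩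
    intro r hr
    obtain ⟨p, hpP, rfl⟩ := hGel y r hr
    have h1 := hcb p hpP y
    have h2 : (0:ℝ) ≤ ‖u - (p.1 + p.2)‖ ^ 2 := sq_nonneg _
    have h3 : ‖y - (p.1 - p.2)‖ ^ 2 ≤ (‖y - (p₀.1 - p₀.2)‖ + 2 * R) ^ 2 := by
      nlinarith [norm_nonneg (y - (p.1 - p.2))]
    rw [hgdef]; linarith
  have hgle : ∀ (y : H) (p) (_ : p ∈ P), g p y ≤ φ y := fun y p hp => by
    rw [hφdef]; exact le_csSup (hbdd y) (hGmem y p hp)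
  have hlb : ∀ y : H, ‖y - (p₀.1 - p₀.2)‖ ^ 2 - R ^ 2 ≤ φ y := by
    intro y
    have h1 : ‖y - (p₀.1 - p₀.2)‖ ^ 2 - R ^ 2 ≤ g p₀ y := by
      have h0 : ‖u - (p₀.1 + p₀.2)‖ ≤ R := by rw [norm_sub_rev]; exact hp₀R
      have h2 : ‖u - (p₀.1 + p₀.2)‖ ^ 2 ≤ R ^ 2 := by
        nlinarith [norm_nonneg (u - (p₀.1 + p₀.2))]
      rw [hgdef]; linarith
    exact le_trans h1 (hgle y p₀ hp₀)
  have hφlb : ∀ y : H, -R ^ 2 ≤ φ y := by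
    intro y; have := hlb y; nlinarith [sq_nonneg ‖y - (p₀.1 - p₀.2)‖]
  have hbddbelow : BddBelow (Set.range φ) := ⟨-R ^ 2, by rintro r ⟨y, rfl⟩; exact hφlb y⟩
  obtain ⟨m, hmdef⟩ : ∃ m : ℝ, m = ⨅ y : H, φ y := ⟨_, rfl⟩
  have hmle : ∀ y : H, m ≤ φ y := fun y => hmdef ▸ ciInf_le hbddbelow y
  -- strong convexity of φ
  have hsc : ∀ y z : H, φ ((1/2 : ℝ) • (y + z)) ≤
      (1/2) * φ y + (1/2) * φ z - (1/4) * ‖y - z‖ ^ 2 := by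
    intro y z
    rw [hφdef]
    apply csSup_le (hGne _)
    intro r hr
    obtain ⟨p, hpP, rfl⟩ := hGel _ r hr
    have key : g p ((1/2 : ℝ) • (y + z)) =
        (1/2) * g p y + (1/2) * g p z - (1/4) * ‖y - z‖ ^ 2 := by
      rw [hgdef, hgdef, hgdef]
      have e1 : (1/2 : ℝ) • (y + z) - (p.1 - p.2)
          = (1/2 : ℝ) • ((y - (p.1 - p.2)) + (z - (p.1 - p.2))) := by
        rw [smul_add, smul_add]; module
      have e2 : y - z = (y - (p.1 - p.2)) - (z - (p.1 - p.2)) := by abel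
      rw [e1, e2, norm_smul]
      have par := parallelogram_law_with_norm ℝ (y - (p.1 - p.2)) (z - (p.1 - p.2))
      simp only [Real.norm_eq_abs]
      rw [mul_pow, sq_abs]
      nlinarith [par]
    rw [key]
    have h1 : g p y ≤ φ y := hgle y p hpP
    have h2 : g p z ≤ φ z := hgle z p hpP
    linarith
  -- minimizing sequence
  have hminseq : ∀ k : ℕ, ∃ y : H, φ y < m + 1/(k+1) := by
    intro k
    have hpos : (0:ℝ) < 1/(k+1) := by positivity
    have hlt : (⨅ y : H, φ y) < m + 1/(k+1) := by rw [← hmdef]; linarith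
    exact exists_lt_of_ciInf_lt hlt
  choose Y hY using hminseq
  have hdist : ∀ j k : ℕ, ‖Y j - Y k‖ ^ 2 ≤ 2 * (1/(j+1)) + 2 * (1/(k+1)) := by
    intro j k
    have h1 := hsc (Y j) (Y k)
    have h2 := hmle ((1/2 : ℝ) • (Y j + Y k))
    have h3 := hY j
    have h4 := hY k
    linarith
  have hcauchy : CauchySeq Y := by
    apply cauchySeq_of_le_tendsto_0 (fun n : ℕ => Real.sqrt (4 * (1/(n+1))))
    · intro j k N hj hk
      have hd := hdist j k
      rw [dist_eq_norm]
      rw [Real.le_sqrt (norm_nonneg _) (by positivity)]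
      have e1 : (1:ℝ)/(j+1) ≤ 1/(N+1) := by
        apply one_div_le_one_div_of_le (by positivity)
        have : (N:ℝ) ≤ (j:ℝ) := by exact_mod_cast hj
        linarith
      have e2 : (1:ℝ)/(k+1) ≤ 1/(N+1) := by
        apply one_div_le_one_div_of_le (by positivity)
        have : (N:ℝ) ≤ (k:ℝ) := by exact_mod_cast hk
        linarith
      linarith
    · have h0 : Filter.Tendsto (fun n : ℕ => 4 * (1/((n:ℝ)+1))) Filter.atTop (nhds 0) := by
        have := (tendsto_one_div_add_atTop_nhds_zero_nat :
          Filter.Tendsto (fun n : ℕ => 1 / ((n : ℝ) + 1)) Filter.atTop (nhds 0))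
        have h4 := this.const_mul (4:ℝ)
        simpa using h4
      have hsq := (Real.continuous_sqrt.tendsto 0).comp h0
      rw [Real.sqrt_zero] at hsq
      exact hsq
  obtain ⟨ystar, hylim⟩ := cauchySeq_tendsto_of_complete hcauchy
  have hkey : ∀ p ∈ P, g p ystar ≤ m := by
    intro p hpP
    have hcont : Continuous fun y : H => g p y := by
      simp only [hgdef]
      exact (((continuous_id.sub continuous_const).norm).pow 2).sub continuous_const
    have hlim : Filter.Tendsto (fun k => g p (Y k)) Filter.atTop (nhds (g p ystar)) :=
      (hcont.tendsto ystar).comp hylim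
    have hrhs : Filter.Tendsto (fun k : ℕ => m + 1/((k:ℝ)+1)) Filter.atTop (nhds m) := by
      have := (tendsto_one_div_add_atTop_nhds_zero_nat :
        Filter.Tendsto (fun n : ℕ => 1 / ((n : ℝ) + 1)) Filter.atTop (nhds 0))
      have h' := (tendsto_const_nhds (x := m) (f := Filter.atTop (α := ℕ))).add this
      simpa using h'
    refine le_of_tendsto_of_tendsto' hlim hrhs ?_
    intro k
    exact le_trans (hgle (Y k) p hpP) (le_of_lt (hY k))
  have hm0 : m ≤ 0 := by
    by_contra hm'
    push_neg at hm'
    obtain ⟨T, hTdef⟩ : ∃ T : Set H,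
        T = {c | ∃ p, p ∈ P ∧ p.1 - p.2 = c ∧ m/2 < g p ystar} := ⟨_, rfl⟩
    have hTmem : ∀ c, c ∈ T ↔ ∃ p, p ∈ P ∧ p.1 - p.2 = c ∧ m/2 < g p ystar := fun c => by
      rw [hTdef]; rfl
    have hTne : T.Nonempty := by
      have h1 : m/2 < φ ystar := lt_of_lt_of_le (by linarith) (hmle ystar)
      rw [hφdef] at h1
      obtain ⟨r, hrG, hrlt⟩ := exists_lt_of_lt_csSup (hGne ystar) h1
      obtain ⟨p, hpP, hpr⟩ := hGel ystar r hrG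
      exact ⟨p.1 - p.2, (hTmem _).2 ⟨p, hpP, rfl, by rw [hpr]; exact hrlt⟩⟩
    have hTsub : T ⊆ Metric.closedBall (p₀.1 - p₀.2) (2*R) := by
      intro c hc
      obtain ⟨p, hpP, hpc, _⟩ := (hTmem c).1 hc
      rw [Metric.mem_closedBall, dist_eq_norm, ← hpc]
      exact hcball p hpP
    obtain ⟨K, hKdef⟩ : ∃ K : Set H, K = closure (convexHull ℝ T) := ⟨_, rfl⟩
    have hKconv : Convex ℝ K := hKdef ▸ (convex_convexHull ℝ T).closure
    have hKclosed : IsClosed K := hKdef ▸ isClosed_closure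
    have hKne : K.Nonempty := by
      obtain ⟨c, hc⟩ := hTne
      exact ⟨c, hKdef ▸ subset_closure (subset_convexHull ℝ T hc)⟩
    have hTK : T ⊆ K := fun c hc => hKdef ▸ subset_closure (subset_convexHull ℝ T hc)
    have hyc : ∀ p ∈ P, ‖ystar - (p.1 - p.2)‖ ≤ ‖ystar - (p₀.1 - p₀.2)‖ + 2*R :=
      fun p hp => hcb p hp ystar
    -- Claim 1 : the minimizer lies in the closed convex hull of near-maximal centers
    have hyK : ystar ∈ K := by
      by_contra hyK
      obtain ⟨q, hqK, hq⟩ :=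
        exists_norm_eq_iInf_of_complete_convex hKne hKclosed.isComplete hKconv ystar
      rw [norm_eq_iInf_iff_real_inner_le_zero hKconv hqK] at hq
      have hne' : ystar ≠ q := fun h => hyK (h ▸ hqK)
      obtain ⟨δ, hδdef⟩ : ∃ δ : ℝ, δ = ‖ystar - q‖^2 := ⟨_, rfl⟩
      have hδpos : 0 < δ := by
        rw [hδdef]
        have hne2 : ystar - q ≠ 0 := sub_ne_zero_of_ne hne'
        exact pow_pos (norm_pos_iff.2 hne2) 2
      obtain ⟨E, hEdef⟩ : ∃ E : ℝ, E = ‖ystar - q‖ * (‖ystar - (p₀.1 - p₀.2)‖ + 2*R) := ⟨_, rfl⟩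
      have hE0 : 0 ≤ E := by
        rw [hEdef]
        apply mul_nonneg (norm_nonneg _)
        have := norm_nonneg (ystar - (p₀.1 - p₀.2)); linarith
      obtain ⟨C, hCdef⟩ : ∃ C : ℝ, C = 2*E + δ := ⟨_, rfl⟩
      have hCpos : 0 < C := by rw [hCdef]; linarith
      obtain ⟨t, htdef⟩ : ∃ t : ℝ, t = min 1 (m/(4*C)) := ⟨_, rfl⟩
      have ht0 : 0 < t := by
        rw [htdef]; exact lt_min one_pos (div_pos hm' (by linarith))
      have ht1 : t ≤ 1 := htdef ▸ min_le_left _ _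
      have htC : t * C ≤ m / 4 := by
        have h1 : t ≤ m/(4*C) := htdef ▸ min_le_right _ _
        have h2 := mul_le_mul_of_nonneg_right h1 hCpos.le
        have h3 : m/(4*C) * C = m/4 := by field_simp
        linarith
      have hexp : ∀ p : H × H, g p (ystar + t • (q - ystar)) =
          g p ystar + 2*t*⟪q - ystar, ystar - (p.1 - p.2)⟫ + t^2 * δ := by
        intro p
        rw [hgdef, hgdef, hδdef]
        have e1 : ystar + t • (q - ystar) - (p.1 - p.2)
            = (ystar - (p.1 - p.2)) + t • (q - ystar) := by abel
        rw [e1, @norm_add_sq_real, real_inner_smul_right, norm_smul, Real.norm_eq_abs,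
          mul_pow, sq_abs, real_inner_comm, norm_sub_rev q ystar]
        ring
      have hboundall : ∀ r ∈ G (ystar + t • (q - ystar)), r ≤ max (m - t*δ) (m/2 + t*C) := by
        intro r hr
        obtain ⟨p, hpP, rfl⟩ := hGel _ r hr
        rw [hexp p]
        by_cases hcase : m/2 < g p ystar
        · have hcT : p.1 - p.2 ∈ T := (hTmem _).2 ⟨p, hpP, rfl, hcase⟩
          have hinner : ⟪ystar - q, (p.1 - p.2) - q⟫ ≤ 0 := hq _ (hTK hcT)
          have hid : ⟪q - ystar, ystar - (p.1 - p.2)⟫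
              = -δ + ⟪ystar - q, (p.1 - p.2) - q⟫ := by
            have e : ystar - (p.1 - p.2) = (ystar - q) + (q - (p.1 - p.2)) := by abel
            rw [e, inner_add_right]
            have e2 : ⟪q - ystar, ystar - q⟫ = -δ := by
              rw [hδdef, ← neg_sub ystar q, inner_neg_left, real_inner_self_eq_norm_sq]
            have e3 : ⟪q - ystar, q - (p.1 - p.2)⟫ = ⟪ystar - q, (p.1 - p.2) - q⟫ := by
              rw [← neg_sub ystar q, ← neg_sub (p.1 - p.2) q, inner_neg_neg]
            rw [e2, e3]
          have hgm : g p ystar ≤ m := hkey p hpP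
          have ht2 : t^2 * δ ≤ t * δ := by
            nlinarith [mul_nonneg (mul_nonneg ht0.le (sub_nonneg.2 ht1)) hδpos.le]
          have hmul : 2*t*⟪q - ystar, ystar - (p.1 - p.2)⟫ ≤ 2*t*(-δ) := by
            apply mul_le_mul_of_nonneg_left _ (by linarith)
            rw [hid]; linarith
          refine le_trans ?_ (le_max_left _ _)
          linarith
        · push_neg at hcase
          have hip : ⟪q - ystar, ystar - (p.1 - p.2)⟫ ≤ E := by
            have h1 := real_inner_le_norm (q - ystar) (ystar - (p.1 - p.2))
            have h2 := hyc p hpP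
            have h3 : ‖q - ystar‖ = ‖ystar - q‖ := norm_sub_rev _ _
            rw [hEdef]
            calc ⟪q - ystar, ystar - (p.1 - p.2)⟫
                ≤ ‖q - ystar‖ * ‖ystar - (p.1 - p.2)‖ := h1
              _ ≤ ‖ystar - q‖ * (‖ystar - (p₀.1 - p₀.2)‖ + 2*R) := by
                  rw [← h3]
                  exact mul_le_mul_of_nonneg_left h2 (norm_nonneg _)
          have ht2 : t^2 * δ ≤ t * δ := by
            nlinarith [mul_nonneg (mul_nonneg ht0.le (sub_nonneg.2 ht1)) hδpos.le]
          refine le_trans ?_ (le_max_right _ _)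
          have hmul : 2*t*⟪q - ystar, ystar - (p.1 - p.2)⟫ ≤ 2*t*E := by
            apply mul_le_mul_of_nonneg_left hip (by linarith)
          have hCeq : m/2 + 2*t*E + t*δ = m/2 + t*C := by rw [hCdef]; ring
          linarith
      have hφyt : φ (ystar + t • (q - ystar)) ≤ max (m - t*δ) (m/2 + t*C) := by
        rw [hφdef]; exact csSup_le (hGne _) hboundall
      have hmax : max (m - t*δ) (m/2 + t*C) < m := by
        apply max_lt
        · nlinarith
        · linarith
      have := hmle (ystar + t • (q - ystar))
      linarith
    -- Claim 2 : finite convex combination and final contradiction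
    obtain ⟨η, hηdef⟩ : ∃ η : ℝ, η = min 1 (m/(4*(8*R+1))) := ⟨_, rfl⟩
    have hRpos : (0:ℝ) < 8*R+1 := by linarith
    have hη0 : 0 < η := by
      rw [hηdef]; exact lt_min one_pos (div_pos hm' (by linarith))
    have hη1 : η ≤ 1 := hηdef ▸ min_le_left _ _
    have hηm : η * (8*R+1) ≤ m/4 := by
      have h1 : η ≤ m/(4*(8*R+1)) := hηdef ▸ min_le_right _ _
      have h2 := mul_le_mul_of_nonneg_right h1 hRpos.le
      have h3 : m/(4*(8*R+1)) * (8*R+1) = m/4 := by field_simp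
      linarith
    have hyhull : ystar ∈ closure (convexHull ℝ T) := hKdef ▸ hyK
    rw [Metric.mem_closure_iff] at hyhull
    obtain ⟨z, hzhull, hzd⟩ := hyhull η hη0
    rw [dist_eq_norm] at hzd
    have hzball : z ∈ Metric.closedBall (p₀.1 - p₀.2) (2*R) :=
      convexHull_min hTsub (convex_closedBall _ _) hzhull
    rw [_root_.convexHull_eq] at hzhull
    obtain ⟨ι, s, w, v, hw0, hw1, hvT, hcm⟩ := hzhull
    rw [Finset.centerMass_eq_of_sum_1 _ _ hw1] at hcm
    have hch : ∀ i : ι, ∃ pp : H × H,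
        i ∈ s → (pp ∈ P ∧ pp.1 - pp.2 = v i ∧ m/2 < g pp ystar) := by
      intro i
      by_cases hi : i ∈ s
      · obtain ⟨p, hp⟩ := (hTmem (v i)).1 (hvT i hi)
        exact ⟨p, fun _ => hp⟩
      · exact ⟨p₀, fun h => absurd h hi⟩

    choose pp hpp using hch
    have hppP : ∀ i ∈ s, pp i ∈ P := fun i hi => (hpp i hi).1
    have hppv : ∀ i ∈ s, (pp i).1 - (pp i).2 = v i := fun i hi => (hpp i hi).2.1
    have hppg : ∀ i ∈ s, m/2 < g (pp i) ystar := fun i hi => (hpp i hi).2.2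
    have S1 : m/2 ≤ ∑ i ∈ s, w i * g (pp i) ystar := by
      have h1 : ∑ i ∈ s, w i * (m/2) ≤ ∑ i ∈ s, w i * g (pp i) ystar := by
        apply Finset.sum_le_sum
        intro i hi
        exact mul_le_mul_of_nonneg_left (le_of_lt (hppg i hi)) (hw0 i hi)
      have h2 : ∑ i ∈ s, w i * (m/2) = m/2 := by rw [← Finset.sum_mul, hw1, one_mul]
      linarith
    have S2 : ∑ i ∈ s, w i * g (pp i) ystar
        = ∑ i ∈ s, w i * (‖ystar - v i‖^2 - ‖u - ((pp i).1 + (pp i).2)‖^2) := by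
      apply Finset.sum_congr rfl
      intro i hi
      rw [hgdef, hppv i hi]
    have hzv : ∀ i ∈ s, ‖z - v i‖ ≤ 4*R := by
      intro i hi
      have h1 : v i ∈ Metric.closedBall (p₀.1 - p₀.2) (2*R) := hTsub (hvT i hi)
      rw [Metric.mem_closedBall, dist_eq_norm] at h1
      rw [Metric.mem_closedBall, dist_eq_norm] at hzball
      calc ‖z - v i‖ = ‖(z - (p₀.1 - p₀.2)) - (v i - (p₀.1 - p₀.2))‖ := by
            rw [sub_sub_sub_cancel_right]
        _ ≤ ‖z - (p₀.1 - p₀.2)‖ + ‖v i - (p₀.1 - p₀.2)‖ := norm_sub_le _ _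
        _ ≤ 4*R := by linarith
    have S3 : ∀ i ∈ s, ‖ystar - v i‖^2 ≤ ‖z - v i‖^2 + η*(8*R+1) := by
      intro i hi
      have h1 : ‖ystar - v i‖ ≤ ‖z - v i‖ + η := by
        calc ‖ystar - v i‖ ≤ ‖ystar - z‖ + ‖z - v i‖ := by
              have e : ystar - v i = (ystar - z) + (z - v i) := by abel
              rw [e]; exact norm_add_le _ _
          _ ≤ ‖z - v i‖ + η := by linarith
      have h2 := hzv i hi
      nlinarith [norm_nonneg (ystar - v i), norm_nonneg (z - v i)]
    have S4 : ∑ i ∈ s, w i * ‖z - v i‖^2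
        ≤ ∑ i ∈ s, w i * ‖u - ((pp i).1 + (pp i).2)‖^2 := by
      have hB1 := lemB s w v hw1
      rw [hcm] at hB1
      have hB2 := lemB s w (fun i => (pp i).1 + (pp i).2) hw1
      have hA := lemA s w (fun i => (pp i).1 + (pp i).2) hw1 u
      have hpair : ∑ i ∈ s, ∑ j ∈ s, w i * (w j * ‖v j - v i‖^2)
          ≤ ∑ i ∈ s, ∑ j ∈ s, w i *
            (w j * ‖((pp j).1 + (pp j).2) - ((pp i).1 + (pp i).2)‖^2) := by
        apply Finset.sum_le_sum; intro i hi
        apply Finset.sum_le_sum; intro j hj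
        apply mul_le_mul_of_nonneg_left _ (hw0 i hi)
        apply mul_le_mul_of_nonneg_left _ (hw0 j hj)
        rw [← hppv i hi, ← hppv j hj]
        have h := lipCenters M hM ((hPmem _).1 (hppP j hj)).1 ((hPmem _).1 (hppP i hi)).1
        nlinarith [norm_nonneg ((pp j).1 - (pp j).2 - ((pp i).1 - (pp i).2))]
      have q1 : ∑ i ∈ s, w i * ‖z - v i‖^2 = ∑ i ∈ s, w i * ‖v i - z‖^2 :=
        Finset.sum_congr rfl (fun i _ => by rw [norm_sub_rev z (v i)])
      have q2 : ∑ i ∈ s, w i * ‖u - ((pp i).1 + (pp i).2)‖^2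
          = ∑ i ∈ s, w i * ‖((pp i).1 + (pp i).2) - u‖^2 :=
        Finset.sum_congr rfl (fun i _ => by rw [norm_sub_rev u ((pp i).1 + (pp i).2)])
      rw [q1, q2]
      have hnn : 0 ≤ ‖(∑ j ∈ s, w j • ((pp j).1 + (pp j).2)) - u‖^2 := sq_nonneg _
      linarith
    have S5 : ∑ i ∈ s, w i * (‖ystar - v i‖^2 - ‖u - ((pp i).1 + (pp i).2)‖^2)
        ≤ ∑ i ∈ s, w i * (‖z - v i‖^2 + η*(8*R+1) - ‖u - ((pp i).1 + (pp i).2)‖^2) := by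
      apply Finset.sum_le_sum
      intro i hi
      apply mul_le_mul_of_nonneg_left _ (hw0 i hi)
      have := S3 i hi
      linarith
    have S6 : ∑ i ∈ s, w i * (‖z - v i‖^2 + η*(8*R+1) - ‖u - ((pp i).1 + (pp i).2)‖^2)
        = (∑ i ∈ s, w i * ‖z - v i‖^2) - (∑ i ∈ s, w i * ‖u - ((pp i).1 + (pp i).2)‖^2)
          + η*(8*R+1) := by
      have e : ∀ i ∈ s, w i * (‖z - v i‖^2 + η*(8*R+1) - ‖u - ((pp i).1 + (pp i).2)‖^2)
          = (w i * ‖z - v i‖^2 - w i * ‖u - ((pp i).1 + (pp i).2)‖^2)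
            + w i * (η*(8*R+1)) := fun i _ => by ring
      rw [Finset.sum_congr rfl e, Finset.sum_add_distrib, Finset.sum_sub_distrib,
        ← Finset.sum_mul, hw1, one_mul]
    linarith
  refine ⟨ystar, ?_⟩
  intro p hpM hpR
  have hp : p ∈ P := (hPmem p).2 ⟨hpM, hpR⟩
  have h := hkey p hp
  rw [hgdef] at h
  nlinarith [norm_nonneg (ystar - (p.1 - p.2)), norm_nonneg (u - (p.1 + p.2))]

lemma DF [CompleteSpace H] (M : Set (H × H)) (hM : MonotoneOp M) (hne : M.Nonempty) (u : H) :
    ∃ x : H, ∀ p ∈ M, 0 ≤ ⟪x - p.1, u - x - p.2⟫ := by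
  classical
  obtain ⟨p₀, hp₀⟩ := hne
  obtain ⟨R₀, hR₀⟩ : ∃ R₀ : ℝ, R₀ = ‖p₀.1 + p₀.2 - u‖ := ⟨_, rfl⟩
  have hR₀0 : 0 ≤ R₀ := hR₀ ▸ norm_nonneg _
  obtain ⟨S, hSdef⟩ : ∃ S : ℕ → Set H, S = fun n : ℕ =>
      ⋂ p ∈ {p ∈ M | ‖p.1 + p.2 - u‖ ≤ R₀ + (n:ℝ)},
        Metric.closedBall (p.1 - p.2) ‖u - (p.1 + p.2)‖ := ⟨_, rfl⟩
  have hSmem : ∀ (n : ℕ) (y : H), y ∈ S n ↔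
      ∀ p ∈ M, ‖p.1 + p.2 - u‖ ≤ R₀ + n → ‖y - (p.1 - p.2)‖ ≤ ‖u - (p.1 + p.2)‖ := by
    intro n y
    rw [hSdef]
    simp only [Set.mem_iInter, Metric.mem_closedBall, Set.mem_setOf_eq, dist_eq_norm]
    constructor
    · intro h p hpM hpR; exact h p ⟨hpM, hpR⟩
    · intro h p hp; exact h p hp.1 hp.2
  have hSne : ∀ n : ℕ, (S n).Nonempty := by
    intro n
    obtain ⟨y, hy⟩ := core M hM u (R₀ + n) ⟨p₀, hp₀, by
      rw [hR₀]; have : (0:ℝ) ≤ n := Nat.cast_nonneg n; linarith⟩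
    exact ⟨y, (hSmem n y).2 hy⟩
  have hSclosed : ∀ n : ℕ, IsClosed (S n) := by
    intro n
    rw [hSdef]
    exact isClosed_biInter fun p _ => Metric.isClosed_closedBall
  have hSconv : ∀ n : ℕ, Convex ℝ (S n) := by
    intro n
    rw [hSdef]
    exact convex_iInter₂ fun p _ => convex_closedBall _ _
  have hSmono : ∀ a b : ℕ, a ≤ b → S b ⊆ S a := by
    intro a b hab y hy
    rw [hSmem] at hy ⊢
    intro p hpM hpR
    refine hy p hpM ?_
    have : (a:ℝ) ≤ (b:ℝ) := Nat.cast_le.2 hab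
    linarith
  -- a uniform bound on S n
  have hSbound : ∀ n : ℕ, ∀ y ∈ S n, dist u y ≤ dist u (p₀.1 - p₀.2) + R₀ := by
    intro n y hy
    have h1 := (hSmem n y).1 hy p₀ hp₀ (by
      rw [hR₀]; have : (0:ℝ) ≤ n := Nat.cast_nonneg n; linarith)
    have h2 : ‖u - (p₀.1 + p₀.2)‖ = R₀ := by rw [hR₀, norm_sub_rev]
    calc dist u y ≤ dist u (p₀.1 - p₀.2) + dist (p₀.1 - p₀.2) y := dist_triangle _ _ _
      _ ≤ dist u (p₀.1 - p₀.2) + R₀ := by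
          have h3 : dist (p₀.1 - p₀.2) y ≤ R₀ := by
            have e : dist (p₀.1 - p₀.2) y = ‖y - (p₀.1 - p₀.2)‖ := by
              rw [dist_comm, dist_eq_norm]
            rw [e, ← h2]; exact h1
          linarith
  obtain ⟨d, hdeq⟩ : ∃ d : ℕ → ℝ, ∀ n, d n = Metric.infDist u (S n) :=
    ⟨fun n => Metric.infDist u (S n), fun _ => rfl⟩
  have hd0 : ∀ n, 0 ≤ d n := fun n => by rw [hdeq]; exact Metric.infDist_nonneg
  have hdmono : Monotone d := by
    intro a b hab
    rw [hdeq, hdeq]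
    exact Metric.infDist_le_infDist_of_subset (hSmono a b hab) (hSne b)
  have hdbdd : ∀ n, d n ≤ dist u (p₀.1 - p₀.2) + R₀ := by
    intro n
    obtain ⟨y, hy⟩ := hSne n
    rw [hdeq]
    exact le_trans (Metric.infDist_le_dist_of_mem hy) (hSbound n y hy)
  -- near minimizers
  have hxch : ∀ n : ℕ, ∃ x ∈ S n, (dist u x)^2 < (d n)^2 + 1/(n+1) := by
    intro n
    have hpos : (0:ℝ) < 1/(n+1) := by positivity
    have hlt : d n < Real.sqrt ((d n)^2 + 1/(n+1)) := by
      rw [Real.lt_sqrt (hd0 n)]; linarith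
    rw [hdeq] at hlt
    obtain ⟨x, hxS, hxd⟩ := (Metric.infDist_lt_iff (hSne n)).1 hlt
    rw [← hdeq] at hxd
    refine ⟨x, hxS, ?_⟩
    have h2 : (0:ℝ) ≤ (d n)^2 + 1/(n+1) := by positivity
    calc (dist u x)^2 < (Real.sqrt ((d n)^2 + 1/(n+1)))^2 := by
          have := dist_nonneg (x := u) (y := x)
          nlinarith [Real.sqrt_nonneg ((d n)^2 + 1/(n+1))]
      _ = (d n)^2 + 1/(n+1) := Real.sq_sqrt h2
  choose X hXS hXd using hxch
  obtain ⟨dsup, hdsup⟩ : ∃ dsup : ℝ, dsup = ⨆ n, d n := ⟨_, rfl⟩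
  have hdbdd' : BddAbove (Set.range d) := ⟨dist u (p₀.1 - p₀.2) + R₀, by
    rintro r ⟨n, rfl⟩; exact hdbdd n⟩
  have hdtend : Filter.Tendsto d Filter.atTop (nhds dsup) := by
    rw [hdsup]; exact tendsto_atTop_ciSup hdmono hdbdd'
  have hdled : ∀ n, d n ≤ dsup := fun n => hdsup ▸ le_ciSup hdbdd' n
  have hdsup0 : 0 ≤ dsup := le_trans (hd0 0) (hdled 0)
  -- Cauchy
  have hXcauchy : CauchySeq X := by
    apply cauchySeq_of_le_tendsto_0
      (fun n : ℕ => Real.sqrt (4*(dsup^2 - (d n)^2) + 4*(1/(n+1))))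
    · intro j k N hj hk
      have hjS : X j ∈ S N := hSmono N j hj (hXS j)
      have hkS : X k ∈ S N := hSmono N k hk (hXS k)
      have hmid : (1/2 : ℝ) • (X j + X k) ∈ S N := by
        have h' := (hSconv N) hjS hkS (by norm_num : (0:ℝ) ≤ 1/2)
          (by norm_num : (0:ℝ) ≤ 1/2) (by norm_num : (1:ℝ)/2 + 1/2 = 1)
        have e : (1/2 : ℝ) • (X j + X k) = (1/2 : ℝ) • X j + (1/2 : ℝ) • X k := smul_add _ _ _
        rw [e]; exact h'
      have hmd : d N ≤ dist u ((1/2 : ℝ) • (X j + X k)) := by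
        rw [hdeq]; exact Metric.infDist_le_dist_of_mem hmid
      -- parallelogram
      have hpar : (dist (X j) (X k))^2 =
          2*(dist u (X j))^2 + 2*(dist u (X k))^2
            - 4*(dist u ((1/2 : ℝ) • (X j + X k)))^2 := by
        have par := parallelogram_law_with_norm ℝ (u - X j) (u - X k)
        have e1 : (u - X j) - (u - X k) = X k - X j := by abel
        have e2 : u - (1/2 : ℝ) • (X j + X k) = (1/2 : ℝ) • ((u - X j) + (u - X k)) := by
          rw [smul_add]; module
        simp only [dist_eq_norm]
        rw [e2, norm_smul, Real.norm_eq_abs]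
        rw [e1] at par
        have e3 : ‖X j - X k‖ = ‖X k - X j‖ := norm_sub_rev _ _
        rw [e3]
        rw [mul_pow, sq_abs]
        nlinarith [par]
      have hb1 := hXd j
      have hb2 := hXd k
      have hj1 : (1:ℝ)/(j+1) ≤ 1/(N+1) := by
        apply one_div_le_one_div_of_le (by positivity)
        have : (N:ℝ) ≤ (j:ℝ) := by exact_mod_cast hj
        linarith
      have hk1 : (1:ℝ)/(k+1) ≤ 1/(N+1) := by
        apply one_div_le_one_div_of_le (by positivity)
        have : (N:ℝ) ≤ (k:ℝ) := by exact_mod_cast hk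
        linarith
      have hjd : d j ≤ dsup := hdled j
      have hkd : d k ≤ dsup := hdled k
      have hsq : (dist (X j) (X k))^2 ≤ 4*(dsup^2 - (d N)^2) + 4*(1/(N+1)) := by
        have h1 : (d j)^2 ≤ dsup^2 := by nlinarith [hd0 j]
        have h2 : (d k)^2 ≤ dsup^2 := by nlinarith [hd0 k]
        have h3 : (d N)^2 ≤ (dist u ((1/2 : ℝ) • (X j + X k)))^2 := by
          nlinarith [hd0 N, dist_nonneg (x := u) (y := (1/2 : ℝ) • (X j + X k))]
        nlinarith
      have hnn : (0:ℝ) ≤ 4*(dsup^2 - (d N)^2) + 4*(1/(N+1)) :=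
        le_trans (sq_nonneg _) hsq
      rw [Real.le_sqrt dist_nonneg hnn]
      exact hsq
    · have h1 : Filter.Tendsto (fun n : ℕ => 4*(dsup^2 - (d n)^2)) Filter.atTop (nhds 0) := by
        have h2 : Filter.Tendsto (fun n : ℕ => (d n)^2) Filter.atTop (nhds (dsup^2)) :=
          (hdtend.pow 2)
        have h3 := Filter.Tendsto.const_sub (dsup^2) h2
        have h4 := h3.const_mul (4:ℝ)
        simpa using h4
      have h5 : Filter.Tendsto (fun n : ℕ => 4*((1:ℝ)/(n+1))) Filter.atTop (nhds 0) := by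
        have := tendsto_one_div_add_atTop_nhds_zero_nat.const_mul (4:ℝ)
        simpa using this
      have h6 := h1.add h5
      rw [add_zero] at h6
      have h7 := (Real.continuous_sqrt.tendsto 0).comp h6
      rw [Real.sqrt_zero] at h7
      exact h7
  obtain ⟨y, hylim⟩ := cauchySeq_tendsto_of_complete hXcauchy
  have hyS : ∀ n : ℕ, y ∈ S n := by
    intro n
    apply (hSclosed n).mem_of_tendsto hylim
    filter_upwards [Filter.eventually_ge_atTop n] with k hk
    exact hSmono n k hk (hXS k)
  refine ⟨(1/2 : ℝ) • (y + u), ?_⟩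
  intro p hpM
  obtain ⟨n, hn⟩ := exists_nat_ge (‖p.1 + p.2 - u‖ - R₀)
  have hball : ‖y - (p.1 - p.2)‖ ≤ ‖u - (p.1 + p.2)‖ :=
    (hSmem n y).1 (hyS n) p hpM (by linarith)
  obtain ⟨a, ha⟩ : ∃ a : H, a = y - (p.1 - p.2) := ⟨_, rfl⟩
  obtain ⟨b, hb⟩ : ∃ b : H, b = u - (p.1 + p.2) := ⟨_, rfl⟩
  rw [← ha, ← hb] at hball
  have e1 : (1/2 : ℝ) • (y + u) - p.1 = (1/2 : ℝ) • (a + b) := by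
    rw [ha, hb]; module
  have e2 : u - (1/2 : ℝ) • (y + u) - p.2 = (1/2 : ℝ) • (b - a) := by
    rw [ha, hb]; module
  rw [e1, e2, real_inner_smul_left, real_inner_smul_right]
  have hI : ⟪a + b, b - a⟫ = ‖b‖^2 - ‖a‖^2 := by
    rw [inner_add_left, inner_sub_right, inner_sub_right,
      real_inner_self_eq_norm_sq, real_inner_self_eq_norm_sq,
      real_inner_comm a b]
    ring
  rw [hI]
  nlinarith [norm_nonneg a, norm_nonneg b]


lemma mono_scale (c : ℝ) (hc : 0 < c) (A : Set (H × H)) (hA : MonotoneOp A) :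
    MonotoneOp (scaleOp c A) := by
  rintro p ⟨q, hq, rfl⟩ p' ⟨q', hq', rfl⟩
  show 0 ≤ ⟪q.1 - q'.1, c • q.2 - c • q'.2⟫
  rw [← smul_sub, real_inner_smul_right]
  exact mul_nonneg hc.le (hA q hq q' hq')

lemma scale_inv_cancel (c : ℝ) (hc : c ≠ 0) (B : Set (H × H)) :
    scaleOp c (scaleOp c⁻¹ B) = B := by
  ext p
  constructor
  · rintro ⟨q, ⟨r, hr, rfl⟩, rfl⟩
    have e : c • c⁻¹ • r.2 = r.2 := smul_inv_smul₀ hc r.2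
    show (r.1, c • c⁻¹ • r.2) ∈ B
    rw [e]
    exact hr
  · intro hp
    refine ⟨(p.1, c⁻¹ • p.2), ⟨p, hp, rfl⟩, ?_⟩
    show p = (p.1, c • c⁻¹ • p.2)
    rw [smul_inv_smul₀ hc]

lemma maxmono_scale (c : ℝ) (hc : 0 < c) (A : Set (H × H)) (hA : MaximallyMonotone A) :
    MaximallyMonotone (scaleOp c A) := by
  refine ⟨mono_scale c hc A hA.1, ?_⟩
  intro B hB hsub
  have hB' : MonotoneOp (scaleOp c⁻¹ B) := mono_scale c⁻¹ (inv_pos.2 hc) B hB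
  have hsub' : A ⊆ scaleOp c⁻¹ B := by
    intro q hq
    have hmem : (q.1, c • q.2) ∈ B := hsub ⟨q, hq, rfl⟩
    refine ⟨(q.1, c • q.2), hmem, ?_⟩
    show q = (q.1, c⁻¹ • c • q.2)
    rw [inv_smul_smul₀ hc.ne']
  have hAeq : scaleOp c⁻¹ B = A := hA.2 _ hB' hsub'
  calc B = scaleOp c (scaleOp c⁻¹ B) := (scale_inv_cancel c hc.ne' B).symm
    _ = scaleOp c A := by rw [hAeq]

/-- For maximally monotone `A` and `|L₁₁| < 1`, the operator `(1/(1-L₁₁)) A` is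
maximally monotone, the fixed-point equation `x = J_A(w + L₁₁ x)` has a unique
solution, and that solution equals `J_{(1/(1-L₁₁))A}(w/(1-L₁₁))`. -/
theorem stmt12 [CompleteSpace H] (A : Set (H × H)) (hA : MaximallyMonotone A)
    (L : ℝ) (hL : |L| < 1) :
    MaximallyMonotone (scaleOp (1 / (1 - L)) A) ∧
    (∀ w : H, ∃! x : H, (x, (w + L • x) - x) ∈ A) ∧
    (∀ w x : H, (x, (w + L • x) - x) ∈ A →
      (x, (1 / (1 - L)) • w - x) ∈ scaleOp (1 / (1 - L)) A) := by
  have hL1 : L < 1 := (abs_lt.1 hL).2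
  have h1L : (0:ℝ) < 1 - L := by linarith
  have hc : (0:ℝ) < 1 / (1 - L) := by positivity
  have hMmax : MaximallyMonotone (scaleOp (1 / (1 - L)) A) := maxmono_scale _ hc A hA
  -- scalar identity used in part 3
  have hscal : ∀ w x : H, (1 / (1 - L)) • ((w + L • x) - x) = (1 / (1 - L)) • w - x := by
    intro w x
    have e : (w + L • x) - x = w + (L - 1) • x := by module
    have e2 : (1 / (1 - L)) * (L - 1) = -1 := by field_simp; ring
    rw [e, smul_add, smul_smul, e2, neg_one_smul, ← sub_eq_add_neg]
  refine ⟨hMmax, ?_, ?_⟩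
  · -- existence and uniqueness
    intro w
    -- uniqueness helper
    have huniq : ∀ x y : H, (x, (w + L • x) - x) ∈ A → (y, (w + L • y) - y) ∈ A → x = y := by
      intro x y hx hy
      have hmono := hA.1 (x, (w + L • x) - x) hx (y, (w + L • y) - y) hy
      have e : ((w + L • x) - x) - ((w + L • y) - y) = (L - 1) • (x - y) := by module
      simp only at hmono
      rw [e, real_inner_smul_right, real_inner_self_eq_norm_sq] at hmono
      have h0 : ‖x - y‖ ^ 2 ≤ 0 := by nlinarith [sq_nonneg ‖x - y‖]
      have h1 : ‖x - y‖ = 0 := by nlinarith [norm_nonneg (x - y), sq_nonneg ‖x - y‖]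
      have := norm_eq_zero.1 h1
      exact sub_eq_zero.1 this
    -- existence
    have hAne : A.Nonempty := by
      by_contra hne
      rw [Set.not_nonempty_iff_eq_empty] at hne
      have hB : MonotoneOp ({((0:H),(0:H))} : Set (H × H)) := by
        intro p hp q hq
        rw [Set.mem_singleton_iff] at hp hq
        rw [hp, hq]
        simp
      have heq := hA.2 {((0:H),(0:H))} hB (by rw [hne]; exact Set.empty_subset _)
      have h0 : (((0:H),(0:H)) : H × H) ∈ ({((0:H),(0:H))} : Set (H × H)) := rfl
      rw [heq, hne] at h0
      exact h0
    have hMne : (scaleOp (1 / (1 - L)) A).Nonempty := by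
      obtain ⟨q, hq⟩ := hAne
      exact ⟨(q.1, (1 / (1 - L)) • q.2), q, hq, rfl⟩
    obtain ⟨x, hx⟩ := DF (scaleOp (1 / (1 - L)) A) hMmax.1 hMne ((1 / (1 - L)) • w)
    -- the extension by (x, u - x) is monotone, hence (x, u - x) ∈ the scaled operator
    have hBmono : MonotoneOp
        (insert (x, (1 / (1 - L)) • w - x) (scaleOp (1 / (1 - L)) A)) := by
      intro p hp q hq
      rcases Set.mem_insert_iff.1 hp with hp' | hpM
      · rcases Set.mem_insert_iff.1 hq with hq' | hqM
        · rw [hp', hq']; simp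
        · rw [hp']
          exact hx q hqM
      · rcases Set.mem_insert_iff.1 hq with hq' | hqM
        · rw [hq']
          show (0:ℝ) ≤ ⟪p.1 - x, p.2 - ((1 / (1 - L)) • w - x)⟫
          rw [show p.1 - x = -(x - p.1) by abel,
            show p.2 - ((1 / (1 - L)) • w - x) = -((1 / (1 - L)) • w - x - p.2) by abel,
            inner_neg_neg]
          exact hx p hpM
        · exact hMmax.1 p hpM q hqM
    have hBeq := hMmax.2 _ hBmono (Set.subset_insert _ _)
    have hxM : (x, (1 / (1 - L)) • w - x) ∈ scaleOp (1 / (1 - L)) A := by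
      rw [← hBeq]; exact Set.mem_insert _ _
    obtain ⟨q, hqA, hq⟩ := hxM
    have hq1 : q.1 = x := by
      have := congrArg Prod.fst hq
      exact this.symm
    have hq2 : (1 / (1 - L)) • w - x = (1 / (1 - L)) • q.2 := congrArg Prod.snd hq
    have hq2' : q.2 = (w + L • x) - x := by
      have h3 : (1 - L) • ((1 / (1 - L)) • w - x) = (1 - L) • ((1 / (1 - L)) • q.2) := by
        rw [hq2]
      have h4 : (1 - L) • ((1 / (1 - L)) • q.2) = q.2 := by
        rw [smul_smul]
        have : (1 - L) * (1 / (1 - L)) = 1 := by field_simp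
        rw [this, one_smul]
      have h5 : (1 - L) • ((1 / (1 - L)) • w - x) = (w + L • x) - x := by
        rw [smul_sub, smul_smul]
        have : (1 - L) * (1 / (1 - L)) = 1 := by field_simp
        rw [this, one_smul]
        module
      rw [h5, h4] at h3
      exact h3.symm
    refine ⟨x, ?_, ?_⟩
    · show (x, (w + L • x) - x) ∈ A
      have : q = (x, (w + L • x) - x) := Prod.ext hq1 hq2'
      rw [← this]
      exact hqA
    · intro y hy
      apply huniq y x hy
      have : q = (x, (w + L • x) - x) := Prod.ext hq1 hq2'
      rw [← this]
      exact hqA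
  · -- part 3
    intro w x hxA
    exact ⟨(x, (w + L • x) - x), hxA, Prod.ext rfl (hscal w x).symm⟩
end

section
/- Let A₁,…,Aₙ be maximally monotone operators on H with zer(Σ Aᵢ) ≠ ∅. Let M ∈ ℝ^{d×n} with Null(MᵀM) = span(𝟙) and MᵀM𝟙 = 0, and let L ∈ ℝ^{n×n} be lower triangular with 𝟙ᵀL𝟙 = n and constant diagonal L_ii < 1. Then the operator T(z) = z + γ M x, where x solves x = J_A(−Mᵀz + L x), has a fixed point: if x̄ ∈ zer(Σ Aᵢ), there exists z̄ with T(z̄) = z̄ and the corresponding x equal to 𝟙 ⊗ x̄. -/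
open Matrix
open scoped RealInnerProductSpace

variable {H : Type*} [NormedAddCommGroup H] [InnerProductSpace ℝ H]

/-- The Kronecker lifting `(M ⊗ Id)` of a real matrix acting on vectors of `H`. -/
def liftMulVec {d n : ℕ} (M : Matrix (Fin d) (Fin n) ℝ) (x : Fin n → H) :
    Fin d → H :=
  fun k => ∑ j, M k j • x j

/-- Real surjectivity: every sum-zero vector is in the range of `Mᵀ`. -/
lemma real_surj {d n : ℕ} (M : Matrix (Fin d) (Fin n) ℝ)
    (hWone : (Mᵀ * M).mulVec 1 = 0)
    (hWnull : ∀ v : Fin n → ℝ, (Mᵀ * M).mulVec v = 0 ↔ ∃ c : ℝ, v = fun _ => c)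
    (a : Fin n → ℝ) (ha : ∑ i, a i = 0) : ∃ s : Fin d → ℝ, Mᵀ.mulVec s = a := by
  rcases Nat.eq_zero_or_pos n with hn | hn
  · subst hn; exact ⟨0, funext fun i => i.elim0⟩
  suffices h : ∃ u, (Mᵀ * M).mulVec u = a by
    obtain ⟨u, hu⟩ := h
    exact ⟨M.mulVec u, by rw [Matrix.mulVec_mulVec]; exact hu⟩
  set f : (Fin n → ℝ) →ₗ[ℝ] (Fin n → ℝ) := (Mᵀ * M).mulVecLin with hf
  set g : (Fin n → ℝ) →ₗ[ℝ] ℝ := ∑ i, LinearMap.proj i with hg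
  have hgapp : ∀ v : Fin n → ℝ, g v = ∑ i, v i := by
    intro v; simp [hg]
  have hsym : ∀ i j, (Mᵀ * M) i j = (Mᵀ * M) j i := by
    intro i j
    have : (Mᵀ * M)ᵀ = Mᵀ * M := by
      rw [Matrix.transpose_mul, Matrix.transpose_transpose]
    conv_lhs => rw [← this]
    rfl
  have hcol : ∀ j, ∑ i, (Mᵀ * M) i j = 0 := by
    intro j
    have h1 : ((Mᵀ * M).mulVec 1) j = ∑ i, (Mᵀ * M) j i := by
      simp [Matrix.mulVec, dotProduct]
    have h2 : ((Mᵀ * M).mulVec 1) j = 0 := by rw [hWone]; rfl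
    rw [h1] at h2
    calc ∑ i, (Mᵀ * M) i j = ∑ i, (Mᵀ * M) j i := Finset.sum_congr rfl fun i _ => hsym i j
    _ = 0 := h2
  -- range f ≤ ker g
  have hle : LinearMap.range f ≤ LinearMap.ker g := by
    rintro _ ⟨u, rfl⟩
    rw [LinearMap.mem_ker, hgapp]
    have : ∀ i, f u i = ∑ j, (Mᵀ * M) i j * u j := by
      intro i; simp only [hf, Matrix.mulVecLin_apply, Matrix.mulVec, dotProduct]
    calc ∑ i, f u i = ∑ i, ∑ j, (Mᵀ * M) i j * u j := Finset.sum_congr rfl fun i _ => this i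
    _ = ∑ j, (∑ i, (Mᵀ * M) i j) * u j := by
        rw [Finset.sum_comm]
        exact Finset.sum_congr rfl fun j _ => by rw [Finset.sum_mul]
    _ = 0 := by simp [hcol]
  -- ker f = span of ones
  have hker : LinearMap.ker f = Submodule.span ℝ {(1 : Fin n → ℝ)} := by
    ext v
    rw [LinearMap.mem_ker, Submodule.mem_span_singleton]
    constructor
    · intro hv
      obtain ⟨c, hc⟩ := (hWnull v).mp hv
      exact ⟨c, by rw [hc]; funext i; simp⟩
    · rintro ⟨c, rfl⟩
      apply (hWnull _).mpr
      exact ⟨c, by funext i; simp⟩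
  have hone_ne : (1 : Fin n → ℝ) ≠ 0 := by
    intro h
    have := congrFun h ⟨0, hn⟩
    simp at this
  have hkerdim : Module.finrank ℝ (LinearMap.ker f) = 1 := by
    rw [hker]; exact finrank_span_singleton hone_ne
  -- g surjective
  have hgsurj : LinearMap.range g = ⊤ := by
    rw [LinearMap.range_eq_top]
    intro c
    refine ⟨fun j => if j = ⟨0, hn⟩ then c else 0, ?_⟩
    rw [hgapp]; simp
  have hpidim : Module.finrank ℝ (Fin n → ℝ) = n := by simp
  have hrangef : Module.finrank ℝ (LinearMap.range f) = n - 1 := by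
    have h := f.finrank_range_add_finrank_ker
    rw [hkerdim, hpidim] at h
    omega
  have hkergdim : Module.finrank ℝ (LinearMap.ker g) = n - 1 := by
    have h := g.finrank_range_add_finrank_ker
    rw [hgsurj] at h
    have h2 : Module.finrank ℝ (⊤ : Submodule ℝ ℝ) = 1 := by simp
    rw [h2, hpidim] at h
    omega
  have heq : LinearMap.range f = LinearMap.ker g :=
    Submodule.eq_of_le_of_finrank_eq hle (by rw [hrangef, hkergdim])
  have hamem : a ∈ LinearMap.ker g := by rw [LinearMap.mem_ker, hgapp]; exact ha
  rw [← heq] at hamem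
  obtain ⟨u, hu⟩ := hamem
  exact ⟨u, hu⟩

/-- Lifted surjectivity. -/
lemma lift_surj {d n : ℕ} (M : Matrix (Fin d) (Fin n) ℝ)
    (hWone : (Mᵀ * M).mulVec 1 = 0)
    (hWnull : ∀ v : Fin n → ℝ, (Mᵀ * M).mulVec v = 0 ↔ ∃ c : ℝ, v = fun _ => c)
    (v : Fin n → H) (hv : ∑ i, v i = 0) :
    ∃ z : Fin d → H, ∀ i, liftMulVec Mᵀ z i = v i := by
  -- basis of sum-zero real vectors hitting each coordinate
  have hs : ∀ i0 : Fin n, ∃ s : Fin d → ℝ,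
      Mᵀ.mulVec s = fun i => (if i = i0 then (1:ℝ) else 0) - 1 / n := by
    intro i0
    have hn : 0 < n := i0.pos
    apply real_surj M hWone hWnull
    have : ∑ i : Fin n, ((if i = i0 then (1:ℝ) else 0) - 1 / n) = 1 - n * (1/n) := by
      rw [Finset.sum_sub_distrib]
      simp [Finset.mul_sum]
    rw [this]
    field_simp
    ring
  choose s hsspec using hs
  refine ⟨fun k => ∑ i0, s i0 k • v i0, fun i => ?_⟩
  have key : ∀ i0, (∑ k, Mᵀ i k * s i0 k) = (if i = i0 then (1:ℝ) else 0) - 1 / n := by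
    intro i0
    have := congrFun (hsspec i0) i
    simpa [Matrix.mulVec, dotProduct] using this
  calc liftMulVec Mᵀ (fun k => ∑ i0, s i0 k • v i0) i
      = ∑ k, ∑ i0, (Mᵀ i k * s i0 k) • v i0 := by
        simp [liftMulVec, Finset.smul_sum, smul_smul]
    _ = ∑ i0, (∑ k, Mᵀ i k * s i0 k) • v i0 := by
        rw [Finset.sum_comm]
        exact Finset.sum_congr rfl fun i0 _ => (Finset.sum_smul).symm
    _ = ∑ i0, ((if i = i0 then (1:ℝ) else 0) - 1 / n) • v i0 := by
        exact Finset.sum_congr rfl fun i0 _ => by rw [key i0]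
    _ = ∑ i0, ((if i = i0 then (1:ℝ) else 0) • v i0) - ∑ i0, (1/(n:ℝ)) • v i0 := by
        rw [← Finset.sum_sub_distrib]
        exact Finset.sum_congr rfl fun i0 _ => by rw [sub_smul]
    _ = v i := by
        rw [← Finset.smul_sum, hv, smul_zero, sub_zero]
        simp

/-- Existence of fixed points: if `xbar ∈ zer(Σ Aᵢ)` (witnessed by `w`), there is `zbar`
with `𝟙 ⊗ xbar = J_A(-Mᵀ zbar + L (𝟙 ⊗ xbar))` and `T(zbar) = zbar + γ M (𝟙 ⊗ xbar) = zbar`. -/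
theorem stmt13 [CompleteSpace H] {d n : ℕ}
    (A : Fin n → Set (H × H)) (hA : ∀ i, MaximallyMonotone (A i))
    (M : Matrix (Fin d) (Fin n) ℝ)
    (hWone : (Mᵀ * M).mulVec 1 = 0)
    (hWnull : ∀ v : Fin n → ℝ, (Mᵀ * M).mulVec v = 0 ↔ ∃ c : ℝ, v = fun _ => c)
    (L : Matrix (Fin n) (Fin n) ℝ) (hLtri : ∀ i j, i < j → L i j = 0)
    (hLsum : ∑ i, ∑ j, L i j = n)
    (ℓ : ℝ) (hℓ : ℓ < 1) (hLdiag : ∀ i, L i i = ℓ)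
    (γ : ℝ)
    (xbar : H) (w : Fin n → H) (hw : ∀ i, (xbar, w i) ∈ A i) (hwsum : ∑ i, w i = 0) :
    ∃ zbar : Fin d → H,
      (∀ i, (xbar, (-liftMulVec Mᵀ zbar i + liftMulVec L (fun _ => xbar) i) - xbar) ∈ A i) ∧
      (∀ k, zbar k + γ • liftMulVec M (fun _ => xbar) k = zbar k) := by
  -- M 𝟙 = 0
  have hM1 : M.mulVec 1 = 0 := by
    have h0 : (1 : Fin n → ℝ) ⬝ᵥ ((Mᵀ * M).mulVec 1) = 0 := by rw [hWone]; simp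
    rw [← Matrix.mulVec_mulVec, Matrix.dotProduct_mulVec, Matrix.vecMul_transpose] at h0
    have : ∀ k, M.mulVec 1 k = 0 := by
      intro k
      have hsq : ∑ k, (M.mulVec 1 k) * (M.mulVec 1 k) = 0 := h0
      have := Finset.sum_eq_zero_iff_of_nonneg
        (fun k _ => mul_self_nonneg (M.mulVec 1 k)) |>.mp hsq k (Finset.mem_univ k)
      exact mul_self_eq_zero.mp this
    funext k; exact this k
  -- the target vector
  set v : Fin n → H := fun i => (∑ j, L i j) • xbar - xbar - w i with hvdef
  have hvsum : ∑ i, v i = 0 := by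
    have h1 : ∑ i, v i = (∑ i, ∑ j, L i j) • xbar - (n : ℝ) • xbar - ∑ i, w i := by
      rw [hvdef]
      rw [Finset.sum_sub_distrib, Finset.sum_sub_distrib, ← Finset.sum_smul]
      simp [Nat.cast_smul_eq_nsmul ℝ]
    rw [h1, hLsum, hwsum, sub_zero, sub_self]
  obtain ⟨zbar, hz⟩ := lift_surj M hWone hWnull v hvsum
  refine ⟨zbar, fun i => ?_, fun k => ?_⟩
  · have hL : liftMulVec L (fun _ => xbar) i = (∑ j, L i j) • xbar := by
      simp [liftMulVec, ← Finset.sum_smul]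
    have : -liftMulVec Mᵀ zbar i + liftMulVec L (fun _ => xbar) i - xbar = w i := by
      rw [hz i, hL, hvdef]
      module
    rw [this]
    exact hw i
  · have : liftMulVec M (fun _ => xbar) k = 0 := by
      have : liftMulVec (H := H) M (fun _ => xbar) k = (M.mulVec 1 k) • xbar := by
        simp [liftMulVec, Matrix.mulVec, dotProduct, ← Finset.sum_smul]
      rw [this, hM1]
      simp
    rw [this, smul_zero, add_zero]
end

section
/- Let A: Hⁿ ⇉ Hⁿ be maximally μ-strongly monotone (μ ≥ 0), M ∈ ℝ^{d×n}, W = MᵀM, L ∈ ℝ^{n×n} lower triangular with 2Id − L − Lᵀ ⪰ W. Define T(z) = z + γ M x where x = J_A(−Mᵀz + Lx). Then for any z¹, z² with images z⁺¹ = T(z¹), z⁺² = T(z²): ‖z¹ − z²‖² + ((γ − 1 − 2μ/‖W‖)/γ)‖(z¹ − z²) − (z⁺¹ − z⁺²)‖² ≥ ‖z⁺¹ − z⁺²‖². In particular T is γ-averaged nonexpansive for γ ∈ (0, 1 + 2μ/‖W‖). -/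
open Matrix
open scoped RealInnerProductSpace

variable {H : Type*} [NormedAddCommGroup H] [InnerProductSpace ℝ H]

/-- The spectral norm (ℓ²-operator norm) of a real square matrix. -/
noncomputable def specNorm {n : ℕ} (W : Matrix (Fin n) (Fin n) ℝ) : ℝ :=
  ‖Matrix.toEuclideanCLM (𝕜 := ℝ) W‖


lemma gram_quad {d n : ℕ} (B : Matrix (Fin d) (Fin n) ℝ) (x : Fin n → H) :
    ∑ i, ∑ j, (Bᵀ * B) i j * ⟪x i, x j⟫ = ∑ k, ‖∑ i, B k i • x i‖ ^ 2 := by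
  have key : ∀ k, (‖∑ i, B k i • x i‖ ^ 2 : ℝ) = ∑ i, ∑ j, B k i * B k j * ⟪x i, x j⟫ := by
    intro k
    rw [← real_inner_self_eq_norm_sq, sum_inner]
    refine Finset.sum_congr rfl fun i _ => ?_
    rw [real_inner_smul_left, inner_sum, Finset.mul_sum]
    refine Finset.sum_congr rfl fun j _ => ?_
    rw [real_inner_smul_right]; ring
  have swap3 : ∀ (f : Fin n → Fin n → Fin d → ℝ),
      ∑ i, ∑ j, ∑ k, f i j k = ∑ k, ∑ i, ∑ j, f i j k := by
    intro f
    calc ∑ i, ∑ j, ∑ k, f i j k = ∑ i, ∑ k, ∑ j, f i j k :=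
          Finset.sum_congr rfl fun i _ => Finset.sum_comm
      _ = ∑ k, ∑ i, ∑ j, f i j k := Finset.sum_comm
  simp only [key, Matrix.mul_apply, Matrix.transpose_apply, Finset.sum_mul]
  rw [swap3]

lemma liftQuadForm_nonneg {n : ℕ} {Z : Matrix (Fin n) (Fin n) ℝ} (hZ : Z.PosSemidef)
    (x : Fin n → H) : 0 ≤ ∑ i, ∑ j, Z i j * ⟪x i, x j⟫ := by
  open scoped Matrix.Norms.L2Operator MatrixOrder in
  obtain ⟨B, rfl⟩ := CStarAlgebra.nonneg_iff_eq_star_mul_self.mp hZ.nonneg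
  rw [Matrix.star_eq_conjTranspose]
  have hBt : Bᴴ = Bᵀ := by ext i j; simp [Matrix.conjTranspose_apply]
  rw [hBt, gram_quad]
  positivity

lemma dot_mulVec_le {n : ℕ} (W : Matrix (Fin n) (Fin n) ℝ) (v : Fin n → ℝ) :
    v ⬝ᵥ (W *ᵥ v) ≤ specNorm W * (v ⬝ᵥ v) := by
  set u : EuclideanSpace ℝ (Fin n) := (WithLp.equiv 2 _).symm v with hu
  have h1 : ⟪u, Matrix.toEuclideanCLM (𝕜 := ℝ) W u⟫ = v ⬝ᵥ (W *ᵥ v) := by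
    rw [hu, WithLp.equiv_symm_apply, Matrix.toEuclideanCLM_toLp]
    simp [PiLp.inner_apply, dotProduct, Matrix.toLin'_apply, RCLike.inner_apply,
      PiLp.toLp_apply, mul_comm]
  have h2 : ‖u‖ ^ 2 = v ⬝ᵥ v := by
    rw [← real_inner_self_eq_norm_sq]
    simp only [hu, WithLp.equiv_symm_apply, PiLp.inner_apply, PiLp.toLp_apply, RCLike.inner_apply, conj_trivial, dotProduct, mul_comm]
  calc v ⬝ᵥ (W *ᵥ v) = ⟪u, Matrix.toEuclideanCLM (𝕜 := ℝ) W u⟫ := h1.symm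
    _ ≤ ‖u‖ * ‖Matrix.toEuclideanCLM (𝕜 := ℝ) W u‖ := real_inner_le_norm _ _
    _ ≤ ‖u‖ * (‖Matrix.toEuclideanCLM (𝕜 := ℝ) W‖ * ‖u‖) :=
        mul_le_mul_of_nonneg_left ((Matrix.toEuclideanCLM (𝕜 := ℝ) W).le_opNorm u) (norm_nonneg u)
    _ = specNorm W * ‖u‖ ^ 2 := by rw [specNorm]; ring
    _ = specNorm W * (v ⬝ᵥ v) := by rw [h2]

lemma specNorm_smul_one_sub_psd {n : ℕ} {W : Matrix (Fin n) (Fin n) ℝ} (hW : W.IsHermitian) :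
    (specNorm W • (1 : Matrix (Fin n) (Fin n) ℝ) - W).PosSemidef := by
  refine Matrix.PosSemidef.of_dotProduct_mulVec_nonneg ?_ ?_
  · have h1 : ((specNorm W) • (1 : Matrix (Fin n) (Fin n) ℝ)).IsHermitian := by
      unfold Matrix.IsHermitian
      simp
    exact h1.sub hW
  · intro v
    have := dot_mulVec_le W v
    simp only [star_trivial, Matrix.sub_mulVec, Matrix.smul_mulVec, Matrix.one_mulVec,
      dotProduct_sub, dotProduct_smul, smul_eq_mul]
    linarith

lemma quadForm_le_specNorm {n : ℕ} {W : Matrix (Fin n) (Fin n) ℝ} (hW : W.IsHermitian)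
    (x : Fin n → H) :
    ∑ i, ∑ j, W i j * ⟪x i, x j⟫ ≤ specNorm W * ∑ i, ‖x i‖ ^ 2 := by
  have h := liftQuadForm_nonneg (specNorm_smul_one_sub_psd hW) x
  have e : ∑ i, ∑ j, ((specNorm W • (1 : Matrix (Fin n) (Fin n) ℝ) - W) i j) * ⟪x i, x j⟫
      = specNorm W * (∑ i, ‖x i‖ ^ 2) - ∑ i, ∑ j, W i j * ⟪x i, x j⟫ := by
    simp only [Matrix.sub_apply, Matrix.smul_apply, Matrix.one_apply, smul_eq_mul,
      sub_mul, Finset.sum_sub_distrib, mul_ite, mul_one, mul_zero, ite_mul, zero_mul,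
      Finset.sum_ite_eq, Finset.mem_univ, if_true, real_inner_self_eq_norm_sq, Finset.mul_sum]
  rw [e] at h
  linarith

/-- Contraction-type inequality for `T(z) = z + γ M x`, `x = J_A(-Mᵀ z + L x)`,
where `A` is maximally `μ`-strongly monotone on `Hⁿ` (inner products and squared
norms on `Hⁿ` written as sums) and `2 Id - L - Lᵀ ⪰ W = MᵀM`:
`‖z¹ - z²‖² + ((γ - 1 - 2μ/‖W‖)/γ) ‖(z¹ - z²) - (z⁺¹ - z⁺²)‖² ≥ ‖z⁺¹ - z⁺²‖²`. -/
theorem stmt14 [CompleteSpace H] {d n : ℕ}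
    (A : Set ((Fin n → H) × (Fin n → H)))
    (μ : ℝ) (hμ : 0 ≤ μ)
    (hstrong : ∀ p ∈ A, ∀ q ∈ A,
      μ * (∑ i, ‖p.1 i - q.1 i‖ ^ 2) ≤ ∑ i, ⟪p.1 i - q.1 i, p.2 i - q.2 i⟫)
    (hmax : ∀ B : Set ((Fin n → H) × (Fin n → H)),
      (∀ p ∈ B, ∀ q ∈ B, 0 ≤ ∑ i, ⟪p.1 i - q.1 i, p.2 i - q.2 i⟫) → A ⊆ B → B = A)
    (M : Matrix (Fin d) (Fin n) ℝ) (L : Matrix (Fin n) (Fin n) ℝ)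
    (hLtri : ∀ i j, i < j → L i j = 0)
    (hZW : ((2 : ℝ) • (1 : Matrix (Fin n) (Fin n) ℝ) - L - Lᵀ - Mᵀ * M).PosSemidef)
    (γ : ℝ) (hγ : 0 < γ)
    (z₁ z₂ zp₁ zp₂ : Fin d → H) (x₁ x₂ : Fin n → H)
    (hx₁ : (x₁, fun i => (-liftMulVec Mᵀ z₁ i + liftMulVec L x₁ i) - x₁ i) ∈ A)
    (hx₂ : (x₂, fun i => (-liftMulVec Mᵀ z₂ i + liftMulVec L x₂ i) - x₂ i) ∈ A)
    (hzp₁ : ∀ k, zp₁ k = z₁ k + γ • liftMulVec M x₁ k)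
    (hzp₂ : ∀ k, zp₂ k = z₂ k + γ • liftMulVec M x₂ k) :
    ∑ k, ‖zp₁ k - zp₂ k‖ ^ 2 ≤
      ∑ k, ‖z₁ k - z₂ k‖ ^ 2 +
        ((γ - 1 - 2 * μ / specNorm (Mᵀ * M)) / γ) *
          ∑ k, ‖(z₁ k - z₂ k) - (zp₁ k - zp₂ k)‖ ^ 2 := by
  classical
  have hWH : (Mᵀ * M).IsHermitian := by
    have h := Matrix.isHermitian_conjTranspose_mul_self M
    have : Mᴴ = Mᵀ := by ext i j; simp [Matrix.conjTranspose_apply]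
    rwa [this] at h
  -- abbreviation facts
  have hdz : ∀ k, zp₁ k - zp₂ k = (z₁ k - z₂ k) + γ • (∑ i, M k i • (x₁ i - x₂ i)) := by
    intro k
    rw [hzp₁, hzp₂]
    simp only [liftMulVec, smul_sub, Finset.sum_sub_distrib]
    abel
  have hg1 : ∑ k, ‖zp₁ k - zp₂ k‖ ^ 2 =
      ∑ k, ‖z₁ k - z₂ k‖ ^ 2
        + 2 * γ * (∑ k, ⟪z₁ k - z₂ k, ∑ i, M k i • (x₁ i - x₂ i)⟫)
        + γ ^ 2 * (∑ k, ‖∑ i, M k i • (x₁ i - x₂ i)‖ ^ 2) := by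
    rw [Finset.mul_sum, Finset.mul_sum, ← Finset.sum_add_distrib, ← Finset.sum_add_distrib]
    refine Finset.sum_congr rfl fun k _ => ?_
    rw [hdz k, norm_add_sq_real, real_inner_smul_right, norm_smul, Real.norm_eq_abs,
      mul_pow, sq_abs]
    ring
  have hg2 : ∑ k, ‖(z₁ k - z₂ k) - (zp₁ k - zp₂ k)‖ ^ 2
      = γ ^ 2 * (∑ k, ‖∑ i, M k i • (x₁ i - x₂ i)‖ ^ 2) := by
    rw [Finset.mul_sum]
    refine Finset.sum_congr rfl fun k _ => ?_
    rw [hdz k]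
    have e : z₁ k - z₂ k - ((z₁ k - z₂ k) + γ • ∑ i, M k i • (x₁ i - x₂ i))
        = -(γ • ∑ i, M k i • (x₁ i - x₂ i)) := by abel
    rw [e, norm_neg, norm_smul, Real.norm_eq_abs, mul_pow, sq_abs]
  -- monotonicity
  have hmono : μ * (∑ i, ‖x₁ i - x₂ i‖ ^ 2) ≤
      -(∑ k, ⟪z₁ k - z₂ k, ∑ i, M k i • (x₁ i - x₂ i)⟫)
        + (∑ i, ∑ j, L i j * ⟪x₁ i - x₂ i, x₁ j - x₂ j⟫)
        - (∑ i, ‖x₁ i - x₂ i‖ ^ 2) := by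
    have h := hstrong _ hx₁ _ hx₂
    simp only at h
    have harg : ∀ i,
        ((-liftMulVec Mᵀ z₁ i + liftMulVec L x₁ i) - x₁ i)
          - ((-liftMulVec Mᵀ z₂ i + liftMulVec L x₂ i) - x₂ i)
        = -(∑ k, M k i • (z₁ k - z₂ k)) + (∑ j, L i j • (x₁ j - x₂ j)) - (x₁ i - x₂ i) := by
      intro i
      simp only [liftMulVec, Matrix.transpose_apply, smul_sub, Finset.sum_sub_distrib]
      abel
    have hinner : ∀ i, ⟪x₁ i - x₂ i,
        ((-liftMulVec Mᵀ z₁ i + liftMulVec L x₁ i) - x₁ i)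
          - ((-liftMulVec Mᵀ z₂ i + liftMulVec L x₂ i) - x₂ i)⟫
        = -(∑ k, M k i * ⟪x₁ i - x₂ i, z₁ k - z₂ k⟫)
          + (∑ j, L i j * ⟪x₁ i - x₂ i, x₁ j - x₂ j⟫)
          - ‖x₁ i - x₂ i‖ ^ 2 := by
      intro i
      rw [harg i, inner_sub_right, inner_add_right, inner_neg_right, inner_sum, inner_sum,
        real_inner_self_eq_norm_sq]
      simp only [real_inner_smul_right]
    rw [Finset.sum_congr rfl fun i _ => hinner i] at h
    rw [Finset.sum_sub_distrib, Finset.sum_add_distrib, Finset.sum_neg_distrib] at h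
    have hswap : ∑ i, ∑ k, M k i * ⟪x₁ i - x₂ i, z₁ k - z₂ k⟫
        = ∑ k, ⟪z₁ k - z₂ k, ∑ i, M k i • (x₁ i - x₂ i)⟫ := by
      rw [Finset.sum_comm]
      refine Finset.sum_congr rfl fun k _ => ?_
      rw [inner_sum]
      refine Finset.sum_congr rfl fun i _ => ?_
      rw [real_inner_smul_right, real_inner_comm]
    rw [hswap] at h
    exact h
  -- PSD inequality from hZW
  have hpsd : 0 ≤ 2 * (∑ i, ‖x₁ i - x₂ i‖ ^ 2)
      - 2 * (∑ i, ∑ j, L i j * ⟪x₁ i - x₂ i, x₁ j - x₂ j⟫)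
      - (∑ k, ‖∑ i, M k i • (x₁ i - x₂ i)‖ ^ 2) := by
    have h := liftQuadForm_nonneg hZW (fun i => x₁ i - x₂ i)
    simp only [Matrix.sub_apply, Matrix.smul_apply, Matrix.one_apply, Matrix.transpose_apply,
      smul_eq_mul, sub_mul, Finset.sum_sub_distrib, mul_ite, mul_one, mul_zero, ite_mul,
      zero_mul, Finset.sum_ite_eq, Finset.mem_univ, if_true, real_inner_self_eq_norm_sq] at h
    have hTL' : ∑ i, ∑ j, L j i * ⟪x₁ i - x₂ i, x₁ j - x₂ j⟫
        = ∑ i, ∑ j, L i j * ⟪x₁ i - x₂ i, x₁ j - x₂ j⟫ := by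
      rw [Finset.sum_comm]
      refine Finset.sum_congr rfl fun i _ => Finset.sum_congr rfl fun j _ => ?_
      rw [real_inner_comm]
    have hgram := gram_quad M (fun i => x₁ i - x₂ i)
    rw [hTL', hgram] at h
    have h2 : ∑ i, 2 * ‖x₁ i - x₂ i‖ ^ 2 = 2 * ∑ i, ‖x₁ i - x₂ i‖ ^ 2 := by
      rw [Finset.mul_sum]
    rw [h2] at h
    linarith
  -- norm bound
  have hNle : (∑ k, ‖∑ i, M k i • (x₁ i - x₂ i)‖ ^ 2)
      ≤ specNorm (Mᵀ * M) * (∑ i, ‖x₁ i - x₂ i‖ ^ 2) := by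
    have h := quadForm_le_specNorm hWH (fun i => x₁ i - x₂ i)
    have hgram := gram_quad M (fun i => x₁ i - x₂ i)
    rw [hgram] at h
    exact h
  have hN0 : (0:ℝ) ≤ ∑ k, ‖∑ i, M k i • (x₁ i - x₂ i)‖ ^ 2 := by positivity
  have hX0 : (0:ℝ) ≤ ∑ i, ‖x₁ i - x₂ i‖ ^ 2 := by positivity
  have hw0 : (0:ℝ) ≤ specNorm (Mᵀ * M) := norm_nonneg _
  set w := specNorm (Mᵀ * M) with hwdef
  set S := ∑ k, ⟪z₁ k - z₂ k, ∑ i, M k i • (x₁ i - x₂ i)⟫ with hSdef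
  set N := ∑ k, ‖∑ i, M k i • (x₁ i - x₂ i)‖ ^ 2 with hNdef
  set X := ∑ i, ‖x₁ i - x₂ i‖ ^ 2 with hXdef
  rw [hg1, hg2]
  have hkey : 2 * μ / w * N ≤ 2 * μ * X := by
    rcases eq_or_lt_of_le hw0 with h | h
    · rw [← h, div_zero, zero_mul]
      positivity
    · rw [div_mul_eq_mul_div, div_le_iff₀ h]
      nlinarith
  have hSle : 2 * S + N ≤ -(2 * μ * X) := by linarith
  have hfinal : γ * (2 * S + N + 2 * μ / w * N) ≤ 0 := by
    have : 2 * S + N + 2 * μ / w * N ≤ 0 := by linarith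
    exact mul_nonpos_of_nonneg_of_nonpos hγ.le this
  have hc : ((γ - 1 - 2 * μ / w) / γ) * (γ ^ 2 * N) = (γ - 1 - 2 * μ / w) * (γ * N) := by
    field_simp
  rw [hc]
  nlinarith [hfinal]
end
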